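/- arXiv:2006.02479 — 8 statements merged into one kernel-verified Lean document; each statement's English description precedes it below -/
import Mathlib

section
/- Let p and q be probability density functions on ℝ with common support R, and suppose the differential Shannon cross-entropy h(p;q) is finite and the differential Rényi cross-entropy h_α(p;q) is well defined for α > 1 near 1. Then lim_{α ↓ 1} h_α(p;q) = h(p;q), i.e., the differential Rényi cross-entropy of order α converges to the differential Shannon cross-entropy as α tends to 1 from above. -/
/-!
With `F s = ∫_R p q^s`, we have `F 0 = 1` and `h_{1+s}(p;q) = -(log F s - log F 0) / s`, so the
limit is `-(log ∘ F)'(0⁺) = -F'(0⁺)`. The right derivative `F'(0⁺) = ∫_R p log q` comes from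
dominated convergence: by convexity of `s ↦ q^s`, the difference quotients `(q^s - 1) / s`
increase with `s` and are bounded below by `log q`, so for `0 < s ≤ s₀` they are squeezed
between the two integrable functions `p log q` and `p (q^{s₀} - 1) / s₀`.
-/

open MeasureTheory Filter Topology Set

namespace Real

lemma log_le_rpow_sub_one_div {q s : ℝ} (hq : 0 < q) (hs : 0 < s) :
    log q ≤ (q ^ s - 1) / s := by
  rw [le_div_iff₀ hs, mul_comm, ← log_rpow hq]
  exact log_le_sub_one_of_pos (rpow_pos_of_pos hq s)

lemma rpow_sub_one_div_mono {q s t : ℝ} (hq : 0 < q) (hs : 0 < s) (hst : s ≤ t) :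
    (q ^ s - 1) / s ≤ (q ^ t - 1) / t := by
  simpa using (convexOn_rpow_left hq).secant_mono (mem_univ 0) (mem_univ s) (mem_univ t)
    hs.ne' (hs.trans_le hst).ne' hst

lemma tendsto_rpow_sub_one_div {q : ℝ} (hq : 0 < q) :
    Tendsto (fun s => (q ^ s - 1) / s) (𝓝[>] 0) (𝓝 (log q)) := by
  have h := hasDerivAt_iff_tendsto_slope.mp (hasStrictDerivAt_const_rpow hq 0).hasDerivAt
  rw [rpow_zero, one_mul] at h
  refine (h.mono_left (nhdsWithin_mono _ fun s (hs : 0 < s) => hs.ne')).congr fun s => ?_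
  rw [slope_def_field, rpow_zero, sub_zero]

end Real

open Real

section

variable {Ω : Type*} [MeasurableSpace Ω] {μ : Measure Ω} {p q : Ω → ℝ}

theorem hasDerivWithinAt_integral_mul_rpow (hp : ∀ᵐ x ∂μ, 0 ≤ p x) (hq : ∀ᵐ x ∂μ, 0 < q x)
    (hp_int : Integrable p μ) (hlog : Integrable (fun x => p x * log (q x)) μ)
    (hpow : ∀ᶠ s in 𝓝[>] (0 : ℝ), Integrable (fun x => p x * q x ^ s) μ) :
    HasDerivWithinAt (fun s : ℝ => ∫ x, p x * q x ^ s ∂μ) (∫ x, p x * log (q x) ∂μ) (Ioi 0) 0 := by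
  obtain ⟨s₀, hs₀_int, hs₀⟩ := (hpow.and self_mem_nhdsWithin).exists
  rw [hasDerivWithinAt_iff_tendsto_slope' self_notMem_Ioi]
  have hslope : ∀ᶠ s in 𝓝[>] (0 : ℝ), slope (fun s : ℝ => ∫ x, p x * q x ^ s ∂μ) 0 s
      = ∫ x, (p x * q x ^ s - p x) / s ∂μ := by
    filter_upwards [hpow] with s hs
    rw [slope_def_field, integral_div, integral_sub hs hp_int]
    simp
  refine Tendsto.congr' (EventuallyEq.symm hslope) ?_
  refine tendsto_integral_filter_of_dominated_convergence
    (fun x => |p x * log (q x)| + |(p x * q x ^ s₀ - p x) / s₀|) ?_ ?_ ?_ ?_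
  · filter_upwards [hpow] with s hs
    exact ((hs.sub hp_int).div_const s).aestronglyMeasurable
  · filter_upwards [Ioc_mem_nhdsGT hs₀] with s hs
    filter_upwards [hp, hq] with x hpx hqx
    have hmul : ∀ t, (p x * q x ^ t - p x) / t = p x * ((q x ^ t - 1) / t) := fun t => by ring
    refine (abs_le_max_abs_abs ?_ ?_).trans (max_le_add_of_nonneg (abs_nonneg _) (abs_nonneg _))
    · rw [hmul]
      exact mul_le_mul_of_nonneg_left (log_le_rpow_sub_one_div hqx hs.1) hpx
    · rw [hmul, hmul]
      exact mul_le_mul_of_nonneg_left (rpow_sub_one_div_mono hqx hs.1 hs.2) hpx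
  · exact hlog.abs.add ((hs₀_int.sub hp_int).div_const s₀).abs
  · filter_upwards [hq] with x hqx
    have h := (tendsto_rpow_sub_one_div hqx).const_mul (p x)
    refine h.congr fun s => ?_
    ring

end

theorem stmt_1_general
    (p q : ℝ → ℝ) (R : Set ℝ) (hR : MeasurableSet R)
    (hp_nonneg : ∀ x, 0 ≤ p x)
    (hq_pos : ∀ x ∈ R, 0 < q x)
    (hp_int : IntegrableOn p R)
    (hp_one : ∫ x in R, p x = 1)
    (h_fin : IntegrableOn (fun x => p x * Real.log (q x)) R)
    (h_def : ∃ γ > (1 : ℝ), ∀ α ∈ Set.Ioo (1 : ℝ) γ,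
      IntegrableOn (fun x => p x * q x ^ (α - 1)) R) :
    Tendsto (fun α : ℝ => (1 / (1 - α)) * Real.log (∫ x in R, p x * q x ^ (α - 1)))
      (𝓝[>] 1) (𝓝 (-∫ x in R, p x * Real.log (q x))) := by
  obtain ⟨γ, hγ, hint⟩ := h_def
  have hpow : ∀ᶠ s in 𝓝[>] (0 : ℝ), IntegrableOn (fun x => p x * q x ^ s) R := by
    filter_upwards [Ioo_mem_nhdsGT (sub_pos.2 hγ)] with s hs
    simpa using hint (s + 1) ⟨by linarith [hs.1], by linarith [hs.2]⟩
  have hF : HasDerivWithinAt (fun s : ℝ => ∫ x in R, p x * q x ^ s)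
      (∫ x in R, p x * Real.log (q x)) (Ioi 0) 0 :=
    hasDerivWithinAt_integral_mul_rpow (ae_of_all _ hp_nonneg)
      ((ae_restrict_mem hR).mono hq_pos) hp_int h_fin hpow
  have hF₀ : ∫ x in R, p x * q x ^ (0 : ℝ) = 1 := by simpa using hp_one
  have hlogF := (hF.log (by simp [hp_one])).comp_of_eq 1
    ((hasDerivWithinAt_id (1 : ℝ) (Ioi 1)).sub_const 1) (fun α (hα : 1 < α) => sub_pos.2 hα)
    (sub_self 1).symm
  rw [hasDerivWithinAt_iff_tendsto_slope' self_notMem_Ioi] at hlogF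
  simp only [hF₀, div_one, mul_one] at hlogF
  refine hlogF.neg.congr fun α => ?_
  simp only [slope_def_field, Function.comp_def, id, sub_self, hF₀, log_one, sub_zero]
  rw [← neg_sub α 1, one_div, inv_neg]
  ring

/-- Let `p` and `q` be probability density functions on `ℝ` with common support `R`
(measurable, nonnegative, integrating to 1 w.r.t. Lebesgue measure, strictly positive
on `R`).  If the differential Shannon cross-entropy `h(p;q) = -∫_R p log q` is finite
(i.e., the integrand is integrable) and the differential Rényi cross-entropy
`h_α(p;q) = (1/(1-α)) log ∫_R p q^(α-1)` is well defined for `α > 1` near `1`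
(i.e., the integrand is integrable for `α` in some interval `(1, γ)`), then
`h_α(p;q) → h(p;q)` as `α ↓ 1`. -/
theorem stmt_1
    (p q : ℝ → ℝ) (R : Set ℝ) (hR : MeasurableSet R)
    (hp_meas : Measurable p) (hq_meas : Measurable q)
    (hp_nonneg : ∀ x, 0 ≤ p x) (hq_nonneg : ∀ x, 0 ≤ q x)
    (hp_pos : ∀ x ∈ R, 0 < p x) (hq_pos : ∀ x ∈ R, 0 < q x)
    (hp_int : IntegrableOn p R) (hq_int : IntegrableOn q R)
    (hp_one : ∫ x in R, p x = 1) (hq_one : ∫ x in R, q x = 1)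
    (h_fin : IntegrableOn (fun x => p x * Real.log (q x)) R)
    (h_def : ∃ γ > (1 : ℝ), ∀ α ∈ Set.Ioo (1 : ℝ) γ,
      IntegrableOn (fun x => p x * q x ^ (α - 1)) R) :
    Tendsto (fun α : ℝ => (1 / (1 - α)) * Real.log (∫ x in R, p x * q x ^ (α - 1)))
      (𝓝[>] 1) (𝓝 (-∫ x in R, p x * Real.log (q x))) :=
  stmt_1_general p q R hR hp_nonneg hq_pos hp_int hp_one h_fin h_def
end

section
/- Let p and q be probability density functions on ℝ with common support R. The differential Rényi cross-entropy h_α(p;q) is monotonically decreasing (nonincreasing) in α for α > 0, α ≠ 1: for all 0 < α₁ < α₂ with α₁, α₂ ≠ 1 such that h_{α₁}(p;q) and h_{α₂}(p;q) are well defined and finite (and, if α₁ < 1 < α₂, such that h(p;q) is finite and E_{A∼p}[1/q(A)] < ∞), one has h_{α₂}(p;q) ≤ h_{α₁}(p;q). -/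
/-!
Put `ν := p · dx` on `R` and `X := log q`. Then `∫_R p q^(α-1) = 𝔼_ν[exp ((α-1) X)]` is the
moment generating function of `X`, so `h_α(p;q) = -K(α-1)/(α-1)` with `K` the cumulant generating
function. Hölder's inequality makes `K` convex on the interval where it is finite, and `K 0 = 0`
since `ν` is a probability measure; hence `K t / t`, the slope of the chord of `K` from the
origin, is nondecreasing in `t`.
-/

open MeasureTheory Real ProbabilityTheory

theorem integral_rpow_mul_rpow_le {α : Type*} [MeasurableSpace α] {μ : Measure α}
    {f g : α → ℝ} (hf0 : 0 ≤ᵐ[μ] f) (hg0 : 0 ≤ᵐ[μ] g) (hf : Integrable f μ) (hg : Integrable g μ)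
    {p q : ℝ} (hp : 0 ≤ p) (hq : 0 ≤ q) (hpq : p + q = 1) :
    ∫ x, f x ^ p * g x ^ q ∂μ ≤ (∫ x, f x ∂μ) ^ p * (∫ x, g x ∂μ) ^ q := by
  have hfg0 : 0 ≤ᵐ[μ] fun x => f x ^ p * g x ^ q := by
    filter_upwards [hf0, hg0] with x hfx hgx
    exact mul_nonneg (rpow_nonneg hfx p) (rpow_nonneg hgx q)
  rw [integral_eq_lintegral_of_nonneg_ae hfg0
      ((hf.1.aemeasurable.pow_const p).mul (hg.1.aemeasurable.pow_const q)).aestronglyMeasurable,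
    integral_eq_lintegral_of_nonneg_ae hf0 hf.1, integral_eq_lintegral_of_nonneg_ae hg0 hg.1,
    ENNReal.toReal_rpow, ENNReal.toReal_rpow, ← ENNReal.toReal_mul]
  refine ENNReal.toReal_mono (ENNReal.mul_ne_top
    (ENNReal.rpow_ne_top_of_nonneg hp hf.lintegral_lt_top.ne)
    (ENNReal.rpow_ne_top_of_nonneg hq hg.lintegral_lt_top.ne)) ?_
  calc ∫⁻ x, ENNReal.ofReal (f x ^ p * g x ^ q) ∂μ
      = ∫⁻ x, ENNReal.ofReal (f x) ^ p * ENNReal.ofReal (g x) ^ q ∂μ := by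
        refine lintegral_congr_ae ?_
        filter_upwards [hf0, hg0] with x hfx hgx
        rw [ENNReal.ofReal_mul (rpow_nonneg hfx p), ENNReal.ofReal_rpow_of_nonneg hfx hp,
          ENNReal.ofReal_rpow_of_nonneg hgx hq]
    _ ≤ _ := ENNReal.lintegral_mul_norm_pow_le hf.1.aemeasurable.ennreal_ofReal
        hg.1.aemeasurable.ennreal_ofReal hp hq hpq

namespace ProbabilityTheory

variable {Ω : Type*} [MeasurableSpace Ω] {X : Ω → ℝ} {μ : Measure Ω}

theorem mgf_mul_add_mul_le {a b p q : ℝ} (ha : a ∈ integrableExpSet X μ)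
    (hb : b ∈ integrableExpSet X μ) (hp : 0 ≤ p) (hq : 0 ≤ q) (hpq : p + q = 1) :
    mgf X μ (p * a + q * b) ≤ mgf X μ a ^ p * mgf X μ b ^ q := by
  have hexp : ∀ ω, exp ((p * a + q * b) * X ω) = exp (a * X ω) ^ p * exp (b * X ω) ^ q :=
    fun ω => by rw [← exp_mul, ← exp_mul, ← exp_add]; ring_nf
  simp only [mgf, hexp]
  exact integral_rpow_mul_rpow_le (ae_of_all _ fun _ => (exp_pos _).le)
    (ae_of_all _ fun _ => (exp_pos _).le) ha hb hp hq hpq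

theorem convexOn_cgf [NeZero μ] : ConvexOn ℝ (integrableExpSet X μ) (cgf X μ) := by
  refine ⟨convex_integrableExpSet, fun a ha b hb p q hp hq hpq => ?_⟩
  have hmem : p • a + q • b ∈ integrableExpSet X μ := convex_integrableExpSet ha hb hp hq hpq
  have hMa := mgf_pos' (NeZero.ne μ) ha
  have hMb := mgf_pos' (NeZero.ne μ) hb
  calc cgf X μ (p • a + q • b)
      ≤ log (mgf X μ a ^ p * mgf X μ b ^ q) :=
        log_le_log (mgf_pos' (NeZero.ne μ) hmem) (mgf_mul_add_mul_le ha hb hp hq hpq)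
    _ = p • cgf X μ a + q • cgf X μ b := by
        rw [log_mul (rpow_pos_of_pos hMa p).ne' (rpow_pos_of_pos hMb q).ne', log_rpow hMa,
          log_rpow hMb]
        rfl

theorem monotoneOn_cgf_div [IsProbabilityMeasure μ] :
    MonotoneOn (fun t => cgf X μ t / t) (integrableExpSet X μ \ {0}) := by
  rintro s ⟨hs, hs0⟩ t ⟨ht, ht0⟩ hst
  have h0 : (0 : ℝ) ∈ integrableExpSet X μ := by simp [integrableExpSet]
  simpa using convexOn_cgf.secant_mono h0 hs ht hs0 ht0 hst

end ProbabilityTheory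

section Density

variable {α : Type*} [MeasurableSpace α] {μ : Measure α} {f : α → ℝ}

theorem isProbabilityMeasure_withDensity_ofReal (hf0 : 0 ≤ᵐ[μ] f) (hf : Integrable f μ)
    (hf1 : ∫ x, f x ∂μ = 1) :
    IsProbabilityMeasure (μ.withDensity fun x => ENNReal.ofReal (f x)) :=
  ⟨by rw [withDensity_apply _ MeasurableSet.univ, Measure.restrict_univ,
    ← ofReal_integral_eq_lintegral_ofReal hf hf0, hf1, ENNReal.ofReal_one]⟩

theorem integral_withDensity_ofReal (hf0 : 0 ≤ᵐ[μ] f) (hf : AEMeasurable f μ) (g : α → ℝ) :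
    ∫ x, g x ∂μ.withDensity (fun x => ENNReal.ofReal (f x)) = ∫ x, f x * g x ∂μ := by
  rw [integral_withDensity_eq_integral_toReal_smul₀ hf.ennreal_ofReal
    (ae_of_all _ fun _ => ENNReal.ofReal_lt_top)]
  refine integral_congr_ae ?_
  filter_upwards [hf0] with x hx
  simp [ENNReal.toReal_ofReal hx]

theorem integrable_withDensity_ofReal_iff (hf0 : 0 ≤ᵐ[μ] f) (hf : AEMeasurable f μ)
    {g : α → ℝ} :
    Integrable g (μ.withDensity fun x => ENNReal.ofReal (f x)) ↔
      Integrable (fun x => f x * g x) μ := by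
  rw [integrable_withDensity_iff_integrable_smul₀' hf.ennreal_ofReal
    (ae_of_all _ fun _ => ENNReal.ofReal_lt_top)]
  refine integrable_congr ?_
  filter_upwards [hf0] with x hx
  simp [ENNReal.toReal_ofReal hx]

variable {q : α → ℝ}

theorem integral_mul_rpow_eq_mgf_log (hf0 : 0 ≤ᵐ[μ] f) (hf : AEMeasurable f μ)
    (hq : ∀ᵐ x ∂μ, 0 < q x) (t : ℝ) :
    ∫ x, f x * q x ^ t ∂μ =
      mgf (fun x => log (q x)) (μ.withDensity fun x => ENNReal.ofReal (f x)) t := by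
  rw [mgf, integral_withDensity_ofReal hf0 hf]
  refine integral_congr_ae ?_
  filter_upwards [hq] with x hx
  rw [rpow_def_of_pos hx, mul_comm t]

theorem mem_integrableExpSet_log_iff (hf0 : 0 ≤ᵐ[μ] f) (hf : AEMeasurable f μ)
    (hq : ∀ᵐ x ∂μ, 0 < q x) {t : ℝ} :
    t ∈ integrableExpSet (fun x => log (q x)) (μ.withDensity fun x => ENNReal.ofReal (f x)) ↔
      Integrable (fun x => f x * q x ^ t) μ := by
  refine (integrable_withDensity_ofReal_iff hf0 hf).trans (integrable_congr ?_)
  filter_upwards [hq] with x hx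
  rw [rpow_def_of_pos hx, mul_comm t]

end Density

theorem stmt_8_general
    (p q : ℝ → ℝ) (R : Set ℝ) (hR : MeasurableSet R)
    (hp_nonneg : ∀ x, 0 ≤ p x)
    (hq_pos : ∀ x ∈ R, 0 < q x)
    (hp_int : IntegrableOn p R)
    (hp_one : ∫ x in R, p x = 1)
    (α₁ α₂ : ℝ) (hα₁₂ : α₁ < α₂) (hα₁ : α₁ ≠ 1) (hα₂ : α₂ ≠ 1)
    (h_int₁ : IntegrableOn (fun x => p x * q x ^ (α₁ - 1)) R)
    (h_int₂ : IntegrableOn (fun x => p x * q x ^ (α₂ - 1)) R) :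
    (1 / (1 - α₂)) * Real.log (∫ x in R, p x * q x ^ (α₂ - 1)) ≤
      (1 / (1 - α₁)) * Real.log (∫ x in R, p x * q x ^ (α₁ - 1)) := by
  have hp0 : 0 ≤ᵐ[volume.restrict R] p := ae_of_all _ hp_nonneg
  have hq : ∀ᵐ x ∂volume.restrict R, 0 < q x := ae_restrict_of_forall_mem hR hq_pos
  have := isProbabilityMeasure_withDensity_ofReal hp0 hp_int hp_one
  have hrenyi : ∀ α, 1 / (1 - α) * log (∫ x in R, p x * q x ^ (α - 1)) =
      -(cgf (fun x => log (q x)) ((volume.restrict R).withDensity fun x => ENNReal.ofReal (p x))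
        (α - 1) / (α - 1)) := by
    intro α
    rw [integral_mul_rpow_eq_mgf_log hp0 hp_int.aemeasurable hq, cgf, one_div_mul_eq_div,
      ← neg_sub α 1, div_neg]
  rw [hrenyi α₁, hrenyi α₂, neg_le_neg_iff]
  exact monotoneOn_cgf_div
    ⟨(mem_integrableExpSet_log_iff hp0 hp_int.aemeasurable hq).2 h_int₁, sub_ne_zero.2 hα₁⟩
    ⟨(mem_integrableExpSet_log_iff hp0 hp_int.aemeasurable hq).2 h_int₂, sub_ne_zero.2 hα₂⟩
    (by linarith)

/-- Monotonicity of the differential Rényi cross-entropy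
`h_α(p;q) = (1/(1-α)) log ∫_R p q^(α-1) dμ` in the order `α`: for probability
densities `p, q` on `ℝ` with common support `R` and `0 < α₁ < α₂` with
`α₁, α₂ ≠ 1`, such that `h_{α₁}(p;q)` and `h_{α₂}(p;q)` are well defined and
finite (the integrands are integrable), and — in case `α₁ < 1 < α₂` — such that
`h(p;q)` is finite and `E_{A∼p}[1/q(A)] < ∞`, one has `h_{α₂}(p;q) ≤ h_{α₁}(p;q)`. -/
theorem stmt_8
    (p q : ℝ → ℝ) (R : Set ℝ) (hR : MeasurableSet R)
    (hp_meas : Measurable p) (hq_meas : Measurable q)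
    (hp_nonneg : ∀ x, 0 ≤ p x) (hq_nonneg : ∀ x, 0 ≤ q x)
    (hp_pos : ∀ x ∈ R, 0 < p x) (hq_pos : ∀ x ∈ R, 0 < q x)
    (hp_int : IntegrableOn p R) (hq_int : IntegrableOn q R)
    (hp_one : ∫ x in R, p x = 1) (hq_one : ∫ x in R, q x = 1)
    (α₁ α₂ : ℝ) (hα₁_pos : 0 < α₁) (hα₁₂ : α₁ < α₂) (hα₁ : α₁ ≠ 1) (hα₂ : α₂ ≠ 1)
    (h_int₁ : IntegrableOn (fun x => p x * q x ^ (α₁ - 1)) R)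
    (h_int₂ : IntegrableOn (fun x => p x * q x ^ (α₂ - 1)) R)
    (h_cross : α₁ < 1 → 1 < α₂ →
      IntegrableOn (fun x => p x * Real.log (q x)) R ∧
      IntegrableOn (fun x => p x / q x) R) :
    (1 / (1 - α₂)) * Real.log (∫ x in R, p x * q x ^ (α₂ - 1)) ≤
      (1 / (1 - α₁)) * Real.log (∫ x in R, p x * q x ^ (α₁ - 1)) :=
  stmt_8_general p q R hR hp_nonneg hq_pos hp_int hp_one α₁ α₂ hα₁₂ hα₁ hα₂ h_int₁ h_int₂
end

section
/- Let p_X and p_g be probability density functions on a measurable space 𝕏 ⊆ ℝ^d (with Lebesgue measure μ) which are strictly positive on their common support, and let a, b ∈ [0,1]. Among all measurable discriminators D : 𝕏 → [0,1], the functional V_D(D) := (1/2)∫ p_X (D − b)² dμ + (1/2)∫ p_g (D − a)² dμ is minimized (almost everywhere uniquely) by D* = (a p_g + b p_X)/(p_g + p_X); that is, V_D(D*) ≤ V_D(D) for every measurable D : 𝕏 → [0,1]. -/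
open MeasureTheory Filter Topology Set

/-- LSGAN/LkGAN optimal discriminator.  Let `pX` and `pg` be probability densities
on `𝕏 ⊆ ℝ^d` (with Lebesgue measure), strictly positive on their common support `X`,
and `a, b ∈ [0,1]`.  Among all measurable discriminators `D : 𝕏 → [0,1]`, the loss
`V_D(D) = (1/2)∫ pX (D - b)² + (1/2)∫ pg (D - a)²` is minimized by
`D* = (a pg + b pX)/(pg + pX)`: `V_D(D*) ≤ V_D(D)` for every such `D`. -/
theorem stmt_10 {d : ℕ}
    (pX pg : (Fin d → ℝ) → ℝ) (X : Set (Fin d → ℝ)) (hX : MeasurableSet X)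
    (hpX_meas : Measurable pX) (hpg_meas : Measurable pg)
    (hpX_nonneg : ∀ x, 0 ≤ pX x) (hpg_nonneg : ∀ x, 0 ≤ pg x)
    (hpX_pos : ∀ x ∈ X, 0 < pX x) (hpg_pos : ∀ x ∈ X, 0 < pg x)
    (hpX_int : IntegrableOn pX X) (hpg_int : IntegrableOn pg X)
    (hpX_one : ∫ x in X, pX x = 1) (hpg_one : ∫ x in X, pg x = 1)
    (a b : ℝ) (ha : a ∈ Set.Icc (0 : ℝ) 1) (hb : b ∈ Set.Icc (0 : ℝ) 1)
    (D : (Fin d → ℝ) → ℝ) (hD_meas : Measurable D)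
    (hD_range : ∀ x ∈ X, D x ∈ Set.Icc (0 : ℝ) 1) :
    (1 / 2) * (∫ x in X, pX x * ((a * pg x + b * pX x) / (pg x + pX x) - b) ^ 2) +
      (1 / 2) * (∫ x in X, pg x * ((a * pg x + b * pX x) / (pg x + pX x) - a) ^ 2) ≤
    (1 / 2) * (∫ x in X, pX x * (D x - b) ^ 2) +
      (1 / 2) * (∫ x in X, pg x * (D x - a) ^ 2) := by
  obtain ⟨ha0, ha1⟩ := ha
  obtain ⟨hb0, hb1⟩ := hb
  set Ds : (Fin d → ℝ) → ℝ := fun x => (a * pg x + b * pX x) / (pg x + pX x) with hDs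
  have hDs_meas : Measurable Ds :=
    ((hpg_meas.const_mul a).add (hpX_meas.const_mul b)).div (hpg_meas.add hpX_meas)
  have hDs_range : ∀ x ∈ X, Ds x ∈ Set.Icc (0 : ℝ) 1 := by
    intro x hx
    have hs : 0 < pg x + pX x := add_pos (hpg_pos x hx) (hpX_pos x hx)
    constructor
    · apply div_nonneg _ hs.le
      have := hpg_nonneg x; have := hpX_nonneg x
      nlinarith
    · rw [div_le_one hs]
      nlinarith [hpg_nonneg x, hpX_nonneg x]
  -- integrability helper
    
  have hint : ∀ (p : (Fin d → ℝ) → ℝ), Measurable p → (∀ x, 0 ≤ p x) → IntegrableOn p X →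
      ∀ (E : (Fin d → ℝ) → ℝ), Measurable E → (∀ x ∈ X, E x ∈ Set.Icc (0:ℝ) 1) →
      ∀ (c : ℝ), 0 ≤ c → c ≤ 1 →
      IntegrableOn (fun x => p x * (E x - c) ^ 2) X := by
    intro p hp hpn hpi E hE hEr c hc0 hc1
    apply Integrable.mono' hpi
    · exact ((hp.mul ((hE.sub measurable_const).pow measurable_const)).aestronglyMeasurable).restrict
    · filter_upwards [ae_restrict_mem hX] with x hx
      obtain ⟨h0, h1⟩ := hEr x hx
      have : (E x - c) ^ 2 ≤ 1 := by nlinarith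
      have hpx := hpn x
      rw [Real.norm_eq_abs, abs_of_nonneg (by positivity)]
      nlinarith
  have hi1 := hint pX hpX_meas hpX_nonneg hpX_int Ds hDs_meas hDs_range b hb0 hb1
  have hi2 := hint pg hpg_meas hpg_nonneg hpg_int Ds hDs_meas hDs_range a ha0 ha1
  have hi3 := hint pX hpX_meas hpX_nonneg hpX_int D hD_meas hD_range b hb0 hb1
  have hi4 := hint pg hpg_meas hpg_nonneg hpg_int D hD_meas hD_range a ha0 ha1
  have key : ∫ x in X, (pX x * (Ds x - b) ^ 2 + pg x * (Ds x - a) ^ 2) ≤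
      ∫ x in X, (pX x * (D x - b) ^ 2 + pg x * (D x - a) ^ 2) := by
    apply setIntegral_mono_on (hi1.add hi2) (hi3.add hi4) hX
    intro x hx
    have hp := hpX_pos x hx
    have hq := hpg_pos x hx
    have hs : 0 < pg x + pX x := add_pos hq hp
    have hiden : pX x * (D x - b) ^ 2 + pg x * (D x - a) ^ 2 -
        (pX x * (Ds x - b) ^ 2 + pg x * (Ds x - a) ^ 2) =
        (pg x + pX x) * (D x - Ds x) ^ 2 := by
      simp only [hDs]
      field_simp
      ring
    simp only [Pi.add_apply]
    nlinarith [mul_nonneg hs.le (sq_nonneg (D x - Ds x))]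
  rw [integral_add hi1 hi2, integral_add hi3 hi4] at key
  linarith
end

section
/- Let p_X and p_g be probability density functions on a measurable space 𝕏 ⊆ ℝ^d (with Lebesgue measure μ) which are strictly positive on their common support, let k ≥ 1, let a, b, c ∈ [0,1] satisfy a − b = 2(c − b), and let D* = (a p_g + b p_X)/(p_g + p_X). Then the LkGAN generator loss evaluated at D* satisfies V_{k,g}(D*) := ∫ p_X |D* − c|^k dμ + ∫ p_g |D* − c|^k dμ = |c − b|^k · |χ|^k(p_X + p_g ∥ 2 p_g) ≥ 0, with equality if and only if p_g = p_X almost everywhere or c = b. -/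
/-!
At the optimal discriminator the deviation `D* - c` factors, thanks to `a - b = 2(c - b)`, as
`(c - b) (p_g - p_X) / (p_g + p_X)`. Hence the generator loss integrand is
`|c - b|^k` times `|p_g - p_X|^k / (p_X + p_g)^(k-1)`, the integrand of
`|χ|^k(p_X + p_g ∥ 2 p_g)`. Since `|p_g - p_X| ≤ p_X + p_g`, everything is dominated by
`p_X + p_g` and hence integrable, and the divergence vanishes iff `2 p_g = p_X + p_g` a.e.
-/

open MeasureTheory Filter Real

/-- `pearsonVajda μ k f g` is the Pearson–Vajda divergence `|χ|^k(f ∥ g)`. -/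
noncomputable def pearsonVajda {α : Type*} [MeasurableSpace α] (μ : Measure α) (k : ℝ)
    (f g : α → ℝ) : ℝ :=
  ∫ x, |g x - f x| ^ k / f x ^ (k - 1) ∂μ

section Pointwise

variable {a b c k p q s t : ℝ}

theorem rpow_div_rpow_sub_one_eq (ht : 0 ≤ t) (hs : 0 < s) :
    t ^ k / s ^ (k - 1) = s * (t / s) ^ k := by
  rw [div_rpow ht hs.le, rpow_sub_one hs.ne']
  field_simp

theorem abs_sub_le_add_of_nonneg (hp : 0 ≤ p) (hq : 0 ≤ q) : |q - p| ≤ p + q :=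
  abs_sub_le_iff.2 ⟨by linarith, by linarith⟩

theorem rpow_div_rpow_sub_one_le (hs : 0 < s) (hts : |t - s| ≤ s) (hk : 0 ≤ k) :
    |t - s| ^ k / s ^ (k - 1) ≤ s := by
  rw [rpow_div_rpow_sub_one_eq (abs_nonneg _) hs]
  exact mul_le_of_le_one_right hs.le
    (rpow_le_one (div_nonneg (abs_nonneg _) hs.le) ((div_le_one hs).2 hts) hk)

theorem optimalDiscriminator_sub_eq (habc : a - b = 2 * (c - b)) (hs : p + q ≠ 0) :
    (a * q + b * p) / (q + p) - c = (c - b) * ((q - p) / (p + q)) := by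
  rw [add_comm q p]
  field_simp
  linear_combination q * habc

theorem abs_optimalDiscriminator_sub_rpow_le (habc : a - b = 2 * (c - b)) (hp : 0 ≤ p)
    (hq : 0 ≤ q) (hs : 0 < p + q) (hk : 0 ≤ k) :
    |(a * q + b * p) / (q + p) - c| ^ k ≤ |c - b| ^ k := by
  refine rpow_le_rpow (abs_nonneg _) ?_ hk
  rw [optimalDiscriminator_sub_eq habc hs.ne', abs_mul, abs_div, abs_of_pos hs]
  exact mul_le_of_le_one_right (abs_nonneg _) ((div_le_one hs).2 (abs_sub_le_add_of_nonneg hp hq))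

theorem generatorLoss_integrand_eq (habc : a - b = 2 * (c - b)) (hs : 0 < p + q) :
    p * |(a * q + b * p) / (q + p) - c| ^ k + q * |(a * q + b * p) / (q + p) - c| ^ k =
      |c - b| ^ k * (|2 * q - (p + q)| ^ k / (p + q) ^ (k - 1)) := by
  rw [optimalDiscriminator_sub_eq habc hs.ne', show 2 * q - (p + q) = q - p by ring,
    rpow_div_rpow_sub_one_eq (abs_nonneg _) hs, abs_mul, mul_rpow (abs_nonneg _) (abs_nonneg _),
    abs_div, abs_of_pos hs]
  ring

end Pointwise

section Divergence

variable {α : Type*} [MeasurableSpace α] {μ : Measure α} {k : ℝ} {f g : α → ℝ}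

theorem integrable_pearsonVajda_integrand (hk : 0 ≤ k) (hf : Integrable f μ)
    (hg : AEMeasurable g μ) (hf_pos : ∀ᵐ x ∂μ, 0 < f x) (hgf : ∀ᵐ x ∂μ, |g x - f x| ≤ f x) :
    Integrable (fun x => |g x - f x| ^ k / f x ^ (k - 1)) μ := by
  refine hf.mono' (by fun_prop : AEMeasurable _ μ).aestronglyMeasurable ?_
  filter_upwards [hf_pos, hgf] with x hx hgx
  rw [norm_of_nonneg (div_nonneg (rpow_nonneg (abs_nonneg _) _) (rpow_nonneg hx.le _))]
  exact rpow_div_rpow_sub_one_le hx hgx hk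

theorem pearsonVajda_nonneg (hf : ∀ᵐ x ∂μ, 0 ≤ f x) : 0 ≤ pearsonVajda μ k f g :=
  integral_nonneg_of_ae <| by
    filter_upwards [hf] with x hx using div_nonneg (rpow_nonneg (abs_nonneg _) _) (rpow_nonneg hx _)

theorem pearsonVajda_eq_zero_iff (hk : k ≠ 0) (hf_pos : ∀ᵐ x ∂μ, 0 < f x)
    (hint : Integrable (fun x => |g x - f x| ^ k / f x ^ (k - 1)) μ) :
    pearsonVajda μ k f g = 0 ↔ g =ᵐ[μ] f := by
  have hnonneg : 0 ≤ᵐ[μ] fun x => |g x - f x| ^ k / f x ^ (k - 1) := by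
    filter_upwards [hf_pos] with x hx
    exact div_nonneg (rpow_nonneg (abs_nonneg _) _) (rpow_nonneg hx.le _)
  rw [pearsonVajda, integral_eq_zero_iff_of_nonneg_ae hnonneg hint]
  refine eventually_congr (hf_pos.mono fun x hx => ?_)
  simp [div_eq_zero_iff, rpow_eq_zero (abs_nonneg _) hk, (rpow_pos_of_pos hx _).ne', sub_eq_zero]

theorem generatorLoss_eq_mul_pearsonVajda {a b c : ℝ} (habc : a - b = 2 * (c - b)) (hk : 0 ≤ k)
    (hf : Integrable f μ) (hg : Integrable g μ)
    (hf_pos : ∀ᵐ x ∂μ, 0 < f x) (hg_pos : ∀ᵐ x ∂μ, 0 < g x) :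
    (∫ x, f x * |(a * g x + b * f x) / (g x + f x) - c| ^ k ∂μ) +
        ∫ x, g x * |(a * g x + b * f x) / (g x + f x) - c| ^ k ∂μ =
      |c - b| ^ k * pearsonVajda μ k (fun x => f x + g x) (fun x => 2 * g x) := by
  have hmeas : AEStronglyMeasurable
      (fun x => |(a * g x + b * f x) / (g x + f x) - c| ^ k) μ := by
    have hf_meas := hf.aemeasurable
    have hg_meas := hg.aemeasurable
    exact (by fun_prop : AEMeasurable _ μ).aestronglyMeasurable
  have hbound : ∀ᵐ x ∂μ, ‖|(a * g x + b * f x) / (g x + f x) - c| ^ k‖ ≤ |c - b| ^ k := by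
    filter_upwards [hf_pos, hg_pos] with x hfx hgx
    rw [norm_of_nonneg (rpow_nonneg (abs_nonneg _) _)]
    exact abs_optimalDiscriminator_sub_rpow_le habc hfx.le hgx.le (add_pos hfx hgx) hk
  rw [← integral_add (hf.mul_bdd hmeas hbound) (hg.mul_bdd hmeas hbound), pearsonVajda,
    ← integral_const_mul]
  refine integral_congr_ae ?_
  filter_upwards [hf_pos, hg_pos] with x hfx hgx
  exact generatorLoss_integrand_eq habc (add_pos hfx hgx)

end Divergence

theorem stmt_11_general {d : ℕ}
    (pX pg : (Fin d → ℝ) → ℝ) (X : Set (Fin d → ℝ)) (hX : MeasurableSet X)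
    (hpX_pos : ∀ x ∈ X, 0 < pX x) (hpg_pos : ∀ x ∈ X, 0 < pg x)
    (hpX_int : IntegrableOn pX X) (hpg_int : IntegrableOn pg X)
    (k : ℝ) (hk : 1 ≤ k)
    (a b c : ℝ) (habc : a - b = 2 * (c - b)) :
    ∀ V PV : ℝ,
      V = (∫ x in X, pX x * |(a * pg x + b * pX x) / (pg x + pX x) - c| ^ k) +
          (∫ x in X, pg x * |(a * pg x + b * pX x) / (pg x + pX x) - c| ^ k) →
      PV = ∫ x in X, |2 * pg x - (pX x + pg x)| ^ k / (pX x + pg x) ^ (k - 1) →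
      (V = |c - b| ^ k * PV ∧ 0 ≤ V ∧
        (V = 0 ↔ pg =ᵐ[volume.restrict X] pX ∨ c = b)) := by
  intro V PV hV hPV
  change PV = pearsonVajda _ k (fun x => pX x + pg x) (fun x => 2 * pg x) at hPV
  have hpX_ae := (ae_restrict_iff' hX).2 (ae_of_all volume hpX_pos)
  have hpg_ae := (ae_restrict_iff' hX).2 (ae_of_all volume hpg_pos)
  have hsum_pos : ∀ᵐ x ∂volume.restrict X, 0 < pX x + pg x := by
    filter_upwards [hpX_ae, hpg_ae] with x hx hy using add_pos hx hy
  have hdom : ∀ᵐ x ∂volume.restrict X, |2 * pg x - (pX x + pg x)| ≤ pX x + pg x := by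
    filter_upwards [hpX_ae, hpg_ae] with x hx hy
    rw [show 2 * pg x - (pX x + pg x) = pg x - pX x by ring]
    exact abs_sub_le_add_of_nonneg hx.le hy.le
  have hVeq : V = |c - b| ^ k * PV := by
    rw [hV, hPV, generatorLoss_eq_mul_pearsonVajda habc (by linarith) hpX_int hpg_int hpX_ae hpg_ae]
  refine ⟨hVeq, hVeq ▸ hPV ▸ mul_nonneg (rpow_nonneg (abs_nonneg _) _)
    (pearsonVajda_nonneg (hsum_pos.mono fun x hx => hx.le)), ?_⟩
  have hint := integrable_pearsonVajda_integrand (by linarith : 0 ≤ k) (hpX_int.add hpg_int)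
    (hpg_int.aemeasurable.const_mul 2) hsum_pos hdom
  rw [hVeq, mul_eq_zero, rpow_eq_zero (abs_nonneg _) (by linarith), abs_eq_zero, sub_eq_zero,
    hPV, pearsonVajda_eq_zero_iff (by linarith) hsum_pos hint, or_comm]
  exact or_congr_left <| eventually_congr <|
    ae_of_all _ fun x => ⟨fun h => by linarith, fun h => by linarith⟩

/-- LkGAN generator loss at the optimal discriminator.  Let `pX`, `pg` be probability
densities on `𝕏 ⊆ ℝ^d` (Lebesgue measure), strictly positive on their common support
`X`, let `k ≥ 1`, `a, b, c ∈ [0,1]` with `a - b = 2(c - b)`, and let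
`D* = (a pg + b pX)/(pg + pX)`.  Then
`V_{k,g}(D*) = ∫ pX |D* - c|^k + ∫ pg |D* - c|^k = |c - b|^k ⋅ |χ|^k(pX + pg ‖ 2 pg) ≥ 0`,
with equality iff `pg = pX` a.e. or `c = b`, where
`|χ|^k(f‖g) = ∫ |g - f|^k / f^(k-1) dμ` is the Pearson-Vajda divergence of order `k`. -/
theorem stmt_11 {d : ℕ}
    (pX pg : (Fin d → ℝ) → ℝ) (X : Set (Fin d → ℝ)) (hX : MeasurableSet X)
    (hpX_meas : Measurable pX) (hpg_meas : Measurable pg)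
    (hpX_nonneg : ∀ x, 0 ≤ pX x) (hpg_nonneg : ∀ x, 0 ≤ pg x)
    (hpX_pos : ∀ x ∈ X, 0 < pX x) (hpg_pos : ∀ x ∈ X, 0 < pg x)
    (hpX_int : IntegrableOn pX X) (hpg_int : IntegrableOn pg X)
    (hpX_one : ∫ x in X, pX x = 1) (hpg_one : ∫ x in X, pg x = 1)
    (k : ℝ) (hk : 1 ≤ k)
    (a b c : ℝ) (ha : a ∈ Set.Icc (0 : ℝ) 1) (hb : b ∈ Set.Icc (0 : ℝ) 1)
    (hc : c ∈ Set.Icc (0 : ℝ) 1) (habc : a - b = 2 * (c - b)) :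
    ∀ V PV : ℝ,
      V = (∫ x in X, pX x * |(a * pg x + b * pX x) / (pg x + pX x) - c| ^ k) +
          (∫ x in X, pg x * |(a * pg x + b * pX x) / (pg x + pX x) - c| ^ k) →
      PV = ∫ x in X, |2 * pg x - (pX x + pg x)| ^ k / (pX x + pg x) ^ (k - 1) →
      (V = |c - b| ^ k * PV ∧ 0 ≤ V ∧
        (V = 0 ↔ pg =ᵐ[volume.restrict X] pX ∨ c = b)) :=
  stmt_11_general pX pg X hX hpX_pos hpg_pos hpX_int hpg_int k hk a b c habc
end

section
/- Let p_X and p_Z' be probability density functions on measurable spaces (with Lebesgue measure), let D be a measurable function with values in (0,1), and write f := D on the support of p_X and g' := 1 − D∘g on the support of p_Z'. If the original GAN generator loss V(D,g) := ∫ p_X log D dμ + ∫ p_Z' log(1 − D∘g) dμ is finite, then lim_{α ↓ 1} V_α(D,g) = V(D,g), where V_α(D,g) := (1/(α−1)) log(∫ p_X D^{α−1} dμ) + (1/(α−1)) log(∫ p_Z' (1 − D∘g)^{α−1} dμ) is the Rényi GAN generator loss of order α; that is, the negative sum of the two Rényi cross-entropy functionals converges to the negative sum of the two Shannon cross-entropy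 functionals as α tends to 1 from above. -/
/-!
The Rényi term `(1/t) log ∫ p f^t` is the difference quotient at `t = 0` of `t ↦ log ∫ p f^t`,
which vanishes at `0` because `p` is a probability density. So its limit as `t ↓ 0` is the right
derivative of `F t = ∫ p f^t` at `0`, which is `∫ p log f` by dominated convergence: for
`0 < f ≤ 1` the difference quotients `(f^t - 1)/t` are bounded by `|log f|`, by convexity of `exp`.
Applying this to `f = D` and `f = 1 - D∘g` with `t = α - 1` gives the theorem.
-/

open MeasureTheory Filter Topology Set

namespace Real

lemma abs_rpow_sub_one_div_le_abs_log {c t : ℝ} (hc₀ : 0 < c) (hc₁ : c ≤ 1) (ht : 0 < t) :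
    |(c ^ t - 1) / t| ≤ |log c| := by
  have hlog : log c ≤ 0 := log_nonpos hc₀.le hc₁
  have hle : c ^ t ≤ 1 := rpow_le_one hc₀.le hc₁ ht.le
  have hexp : t * log c + 1 ≤ c ^ t := by
    rw [rpow_def_of_pos hc₀, mul_comm]
    exact add_one_le_exp _
  rw [abs_div, abs_of_pos ht, abs_of_nonpos (by linarith), abs_of_nonpos hlog, div_le_iff₀ ht]
  linarith

lemma tendsto_rpow_sub_one_div_nhdsGT_zero {c : ℝ} (hc : 0 < c) :
    Tendsto (fun t : ℝ => (c ^ t - 1) / t) (𝓝[>] 0) (𝓝 (log c)) := by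
  have h : HasDerivAt (fun t : ℝ => c ^ t) (log c) 0 := by
    simpa using (hasStrictDerivAt_const_rpow hc 0).hasDerivAt
  simpa [div_eq_inv_mul] using h.tendsto_slope_zero_right

end Real

section RpowIntegral

variable {E : Type*} [MeasurableSpace E] {μ : Measure E} {p f : E → ℝ}

lemma integrable_mul_rpow_of_mem_Ioc (hp : Integrable p μ) (hf : AEMeasurable f μ)
    (hf_range : ∀ᵐ x ∂μ, f x ∈ Ioc 0 1) {t : ℝ} (ht : 0 ≤ t) :
    Integrable (fun x => p x * f x ^ t) μ := by
  refine hp.mul_bdd (hf.pow_const t).aestronglyMeasurable (c := 1) ?_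
  filter_upwards [hf_range] with x ⟨hf₀, hf₁⟩
  rw [Real.norm_of_nonneg (Real.rpow_nonneg hf₀.le t)]
  exact Real.rpow_le_one hf₀.le hf₁ ht

lemma hasDerivWithinAt_integral_mul_rpow_zero (hp : Integrable p μ)
    (hf : AEMeasurable f μ) (hf_range : ∀ᵐ x ∂μ, f x ∈ Ioc 0 1)
    (hlog : Integrable (fun x => p x * Real.log (f x)) μ) :
    HasDerivWithinAt (fun t : ℝ => ∫ x, p x * f x ^ t ∂μ) (∫ x, p x * Real.log (f x) ∂μ)
      (Ioi 0) 0 := by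
  have hslope : Tendsto (fun t : ℝ => ∫ x, p x * ((f x ^ t - 1) / t) ∂μ) (𝓝[>] 0)
      (𝓝 (∫ x, p x * Real.log (f x) ∂μ)) := by
    refine tendsto_integral_filter_of_dominated_convergence (fun x => |p x * Real.log (f x)|)
      (Eventually.of_forall fun t : ℝ => ?_) ?_ hlog.abs ?_
    · exact (hp.aestronglyMeasurable.mul
        (((hf.pow_const t).sub_const 1).div_const t).aestronglyMeasurable)
    · filter_upwards [self_mem_nhdsWithin] with t (ht : 0 < t)
      filter_upwards [hf_range] with x ⟨hf₀, hf₁⟩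
      rw [Real.norm_eq_abs, abs_mul, abs_mul]
      exact mul_le_mul_of_nonneg_left (Real.abs_rpow_sub_one_div_le_abs_log hf₀ hf₁ ht)
        (abs_nonneg _)
    · filter_upwards [hf_range] with x hfx
      exact (Real.tendsto_rpow_sub_one_div_nhdsGT_zero hfx.1).const_mul (p x)
  rw [hasDerivWithinAt_iff_tendsto_slope' self_notMem_Ioi]
  refine hslope.congr' ?_
  filter_upwards [self_mem_nhdsWithin] with t (ht : 0 < t)
  have hp_rpow_zero : Integrable (fun x => p x * f x ^ (0 : ℝ)) μ := by simpa using hp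
  rw [slope_def_field, sub_zero, ← integral_sub (integrable_mul_rpow_of_mem_Ioc hp hf hf_range
    ht.le) hp_rpow_zero, ← integral_div]
  congr 1 with x
  rw [Real.rpow_zero]
  ring

lemma tendsto_one_div_mul_log_integral_mul_rpow (hp : Integrable p μ)
    (hp_one : ∫ x, p x ∂μ = 1) (hf : AEMeasurable f μ) (hf_range : ∀ᵐ x ∂μ, f x ∈ Ioc 0 1)
    (hlog : Integrable (fun x => p x * Real.log (f x)) μ) :
    Tendsto (fun t : ℝ => 1 / t * Real.log (∫ x, p x * f x ^ t ∂μ)) (𝓝[>] 0)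
      (𝓝 (∫ x, p x * Real.log (f x) ∂μ)) := by
  set F := fun t : ℝ => ∫ x, p x * f x ^ t ∂μ
  have hF₀ : F 0 = 1 := by simpa [F] using hp_one
  have hlog_F : HasDerivWithinAt (fun t => Real.log (F t)) (1 * ∫ x, p x * Real.log (f x) ∂μ)
      (Ioi 0) 0 := by
    have hlog_one : HasDerivAt Real.log 1 (F 0) := by
      simpa [hF₀] using Real.hasDerivAt_log one_ne_zero
    exact hlog_one.comp_hasDerivWithinAt (0 : ℝ)
      (hasDerivWithinAt_integral_mul_rpow_zero hp hf hf_range hlog)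
  rw [one_mul, hasDerivWithinAt_iff_tendsto_slope' self_notMem_Ioi] at hlog_F
  refine hlog_F.congr fun t => ?_
  rw [slope_def_field, hF₀, Real.log_one]
  ring

end RpowIntegral

theorem stmt_14_general {n m : ℕ}
    (pX : (Fin n → ℝ) → ℝ) (pZ : (Fin m → ℝ) → ℝ)
    (X : Set (Fin n → ℝ)) (Z : Set (Fin m → ℝ))
    (hX : MeasurableSet X) (hZ : MeasurableSet Z)
    (hpX_int : IntegrableOn pX X) (hpZ_int : IntegrableOn pZ Z)
    (hpX_one : ∫ x in X, pX x = 1) (hpZ_one : ∫ z in Z, pZ z = 1)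
    (D : (Fin n → ℝ) → ℝ) (g : (Fin m → ℝ) → (Fin n → ℝ))
    (hD_meas : Measurable D) (hg_meas : Measurable g)
    (hD_range : ∀ x ∈ X, D x ∈ Set.Ioo (0 : ℝ) 1)
    (hDg_range : ∀ z ∈ Z, D (g z) ∈ Set.Ioo (0 : ℝ) 1)
    (hV_fin₁ : IntegrableOn (fun x => pX x * Real.log (D x)) X)
    (hV_fin₂ : IntegrableOn (fun z => pZ z * Real.log (1 - D (g z))) Z) :
    Tendsto (fun α : ℝ =>
        (1 / (α - 1)) * Real.log (∫ x in X, pX x * D x ^ (α - 1)) +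
        (1 / (α - 1)) * Real.log (∫ z in Z, pZ z * (1 - D (g z)) ^ (α - 1)))
      (𝓝[>] 1)
      (𝓝 ((∫ x in X, pX x * Real.log (D x)) +
          ∫ z in Z, pZ z * Real.log (1 - D (g z)))) := by
  have hα : Tendsto (fun α : ℝ => α - 1) (𝓝[>] 1) (𝓝[>] 0) :=
    tendsto_nhdsWithin_of_tendsto_nhds_of_eventually_within _
      (((continuous_sub_right 1).tendsto' 1 0 (sub_self 1)).mono_left nhdsWithin_le_nhds)
      (eventually_nhdsWithin_of_forall fun α (hα : 1 < α) => sub_pos.2 hα)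
  have hD : ∀ᵐ x ∂volume.restrict X, D x ∈ Ioc 0 1 :=
    ae_restrict_of_forall_mem hX fun x hx => Ioo_subset_Ioc_self (hD_range x hx)
  have hDg : ∀ᵐ z ∂volume.restrict Z, 1 - D (g z) ∈ Ioc 0 1 :=
    ae_restrict_of_forall_mem hZ fun z hz =>
      ⟨sub_pos.2 (hDg_range z hz).2, by linarith [(hDg_range z hz).1]⟩
  have hX_term := tendsto_one_div_mul_log_integral_mul_rpow hpX_int hpX_one
    hD_meas.aemeasurable hD hV_fin₁
  have hZ_term := tendsto_one_div_mul_log_integral_mul_rpow hpZ_int hpZ_one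
    (measurable_const.sub (hD_meas.comp hg_meas)).aemeasurable hDg hV_fin₂
  exact (hX_term.comp hα).add (hZ_term.comp hα)

/-- Rényi GAN generator loss converges to the original GAN loss as `α ↓ 1`.
Let `pX` (on `X ⊆ ℝ^n`) and `pZ` (on `Z ⊆ ℝ^m`) be probability densities
(w.r.t. Lebesgue measure), let `D` be measurable with `D ∈ (0,1)` on the relevant
supports, and let `g` be a measurable generator.  If the original GAN generator
loss `V(D,g) = ∫ pX log D + ∫ pZ log(1 - D∘g)` is finite (both integrands are
integrable), then the Rényi GAN generator loss of order `α`,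
`V_α(D,g) = (1/(α-1)) log ∫ pX D^(α-1) + (1/(α-1)) log ∫ pZ (1 - D∘g)^(α-1)`,
tends to `V(D,g)` as `α ↓ 1`. -/
theorem stmt_14 {n m : ℕ}
    (pX : (Fin n → ℝ) → ℝ) (pZ : (Fin m → ℝ) → ℝ)
    (X : Set (Fin n → ℝ)) (Z : Set (Fin m → ℝ))
    (hX : MeasurableSet X) (hZ : MeasurableSet Z)
    (hpX_meas : Measurable pX) (hpZ_meas : Measurable pZ)
    (hpX_nonneg : ∀ x, 0 ≤ pX x) (hpZ_nonneg : ∀ z, 0 ≤ pZ z)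
    (hpX_pos : ∀ x ∈ X, 0 < pX x) (hpZ_pos : ∀ z ∈ Z, 0 < pZ z)
    (hpX_int : IntegrableOn pX X) (hpZ_int : IntegrableOn pZ Z)
    (hpX_one : ∫ x in X, pX x = 1) (hpZ_one : ∫ z in Z, pZ z = 1)
    (D : (Fin n → ℝ) → ℝ) (g : (Fin m → ℝ) → (Fin n → ℝ))
    (hD_meas : Measurable D) (hg_meas : Measurable g)
    (hD_range : ∀ x ∈ X, D x ∈ Set.Ioo (0 : ℝ) 1)
    (hDg_range : ∀ z ∈ Z, D (g z) ∈ Set.Ioo (0 : ℝ) 1)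
    (hV_fin₁ : IntegrableOn (fun x => pX x * Real.log (D x)) X)
    (hV_fin₂ : IntegrableOn (fun z => pZ z * Real.log (1 - D (g z))) Z) :
    Tendsto (fun α : ℝ =>
        (1 / (α - 1)) * Real.log (∫ x in X, pX x * D x ^ (α - 1)) +
        (1 / (α - 1)) * Real.log (∫ z in Z, pZ z * (1 - D (g z)) ^ (α - 1)))
      (𝓝[>] 1)
      (𝓝 ((∫ x in X, pX x * Real.log (D x)) +
          ∫ z in Z, pZ z * Real.log (1 - D (g z)))) :=
  stmt_14_general pX pZ X Z hX hZ hpX_int hpZ_int hpX_one hpZ_one D g hD_meas hg_meas hD_range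
    hDg_range hV_fin₁ hV_fin₂
end

section
/- Let p_X and p_Z' be probability density functions on measurable spaces (with Lebesgue measure), and let D be a measurable function with values in (0,1). If the original GAN generator loss V(D,g) := ∫ p_X log D dμ + ∫ p_Z' log(1 − D∘g) dμ is finite, E_{A∼p_X}[1/D(A)] < ∞, and E_{B∼p_Z'}[1/(1 − D(g(B)))] < ∞, then lim_{α ↑ 1} V_α(D,g) = V(D,g), where V_α(D,g) := (1/(α−1)) log(∫ p_X D^{α−1} dμ) + (1/(α−1)) log(∫ p_Z' (1 − D∘g)^{α−1} dμ) is the Rényi GAN generator loss of order α. -/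
open MeasureTheory Filter Topology Set

/-!
Put `F t := ∫ p f ^ t`, so that each Rényi term is `log (F t) / t` with `t = α - 1 ↑ 0`. Since
`F 0 = ∫ p = 1`, its limit is the left derivative of `log ∘ F` at `0`, namely `F' 0 = ∫ p log f`.
Differentiation under the integral sign is justified by dominated convergence: for `0 < f ≤ 1` and
`-1 ≤ t < 0`, Bernoulli's inequality bounds the difference quotient `(f ^ t - 1) / t` by `1 / f`,
and `p / f` is integrable.
-/

theorem Real.abs_rpow_sub_one_div_le_inv {y t : ℝ} (hy₀ : 0 < y) (hy₁ : y ≤ 1)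
    (ht₁ : -1 ≤ t) (ht₀ : t < 0) :
    |(y ^ t - 1) / t| ≤ y⁻¹ := by
  have hone : 1 ≤ y ^ t := Real.one_le_rpow_of_pos_of_le_one_of_nonpos hy₀ hy₁ ht₀.le
  have hbernoulli : y ^ t ≤ 1 + -t * (y⁻¹ - 1) := by
    have h := rpow_one_add_le_one_add_mul_self (s := y⁻¹ - 1)
      (by linarith [inv_pos.2 hy₀]) (neg_nonneg.2 ht₀.le) (by linarith)
    rwa [add_sub_cancel, Real.inv_rpow hy₀.le, ← Real.rpow_neg hy₀.le, neg_neg] at h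
  rw [abs_of_nonpos (div_nonpos_of_nonneg_of_nonpos (by linarith) ht₀.le), ← neg_div,
    div_le_iff_of_neg ht₀]
  linarith

theorem Real.tendsto_rpow_sub_one_div_s15 {y : ℝ} (hy : 0 < y) :
    Tendsto (fun t : ℝ => (y ^ t - 1) / t) (𝓝[<] 0) (𝓝 (Real.log y)) := by
  have h := (Real.hasStrictDerivAt_const_rpow hy 0).hasDerivAt.hasDerivWithinAt (s := Iio 0)
  rw [hasDerivWithinAt_iff_tendsto_slope' self_notMem_Iio] at h
  simpa [slope_fun_def_field] using h

section

variable {β : Type*} [MeasurableSpace β] {μ : Measure β} {p f : β → ℝ}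

theorem integrable_mul_rpow_of_integrable_div (hf_meas : AEMeasurable f μ)
    (hf : ∀ᵐ x ∂μ, f x ∈ Ioc 0 1) (hp : Integrable p μ) (hinv : Integrable (fun x => p x / f x) μ)
    {t : ℝ} (ht : -1 ≤ t) :
    Integrable (fun x => p x * f x ^ t) μ := by
  refine hinv.norm.mono' (hp.aestronglyMeasurable.mul (hf_meas.pow_const t).aestronglyMeasurable) ?_
  filter_upwards [hf] with x ⟨hf₀, hf₁⟩
  have hpow : f x ^ t ≤ (f x)⁻¹ := by
    simpa [Real.rpow_neg_one] using Real.rpow_le_rpow_of_exponent_ge hf₀ hf₁ ht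
  rw [norm_mul, norm_div, Real.norm_of_nonneg (Real.rpow_nonneg hf₀.le t),
    Real.norm_of_nonneg hf₀.le, div_eq_mul_inv]
  exact mul_le_mul_of_nonneg_left hpow (norm_nonneg _)

theorem hasDerivWithinAt_integral_mul_rpow_s15 (hf_meas : AEMeasurable f μ)
    (hf : ∀ᵐ x ∂μ, f x ∈ Ioc 0 1) (hp : Integrable p μ) (hinv : Integrable (fun x => p x / f x) μ) :
    HasDerivWithinAt (fun t : ℝ => ∫ x, p x * f x ^ t ∂μ) (∫ x, p x * Real.log (f x) ∂μ)
      (Iio 0) 0 := by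
  have hIoo : Ioo (-1 : ℝ) 0 ∈ 𝓝[<] (0 : ℝ) := Ioo_mem_nhdsLT (by norm_num)
  have hslope : ∀ t ∈ Ioo (-1 : ℝ) 0,
      slope (fun t : ℝ => ∫ x, p x * f x ^ t ∂μ) 0 t = ∫ x, p x * ((f x ^ t - 1) / t) ∂μ := by
    intro t ht
    have hint := integrable_mul_rpow_of_integrable_div hf_meas hf hp hinv ht.1.le
    rw [slope_def_field]
    simp only [sub_zero, Real.rpow_zero, mul_one]
    rw [← integral_sub hint hp, ← integral_div]
    congr 1 with x
    ring
  rw [hasDerivWithinAt_iff_tendsto_slope' self_notMem_Iio]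
  refine Tendsto.congr' (eventuallyEq_of_mem hIoo fun t ht => (hslope t ht).symm) ?_
  refine tendsto_integral_filter_of_dominated_convergence (fun x => ‖p x / f x‖) ?_ ?_ hinv.norm ?_
  · exact Eventually.of_forall fun t => hp.aestronglyMeasurable.mul
      (((hf_meas.pow_const t).sub_const 1).div_const t).aestronglyMeasurable
  · filter_upwards [hIoo] with t ht
    filter_upwards [hf] with x ⟨hf₀, hf₁⟩
    rw [norm_mul, Real.norm_eq_abs ((f x ^ t - 1) / t), norm_div, Real.norm_of_nonneg hf₀.le,
      div_eq_mul_inv]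
    exact mul_le_mul_of_nonneg_left
      (Real.abs_rpow_sub_one_div_le_inv hf₀ hf₁ ht.1.le ht.2) (norm_nonneg _)
  · filter_upwards [hf] with x hfx
    exact (Real.tendsto_rpow_sub_one_div_s15 hfx.1).const_mul (p x)

theorem tendsto_inv_mul_log_integral_mul_rpow (hf_meas : AEMeasurable f μ)
    (hf : ∀ᵐ x ∂μ, f x ∈ Ioc 0 1) (hp : Integrable p μ) (hp_one : ∫ x, p x ∂μ = 1)
    (hinv : Integrable (fun x => p x / f x) μ) :
    Tendsto (fun t : ℝ => (1 / t) * Real.log (∫ x, p x * f x ^ t ∂μ))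
      (𝓝[<] 0) (𝓝 (∫ x, p x * Real.log (f x) ∂μ)) := by
  have hF₀ : ∫ x, p x * f x ^ (0 : ℝ) ∂μ = 1 := by simpa using hp_one
  have h := (hasDerivWithinAt_integral_mul_rpow_s15 hf_meas hf hp hinv).log
    (by rw [hF₀]; exact one_ne_zero)
  rw [hasDerivWithinAt_iff_tendsto_slope' self_notMem_Iio] at h
  simpa [slope_fun_def_field, hF₀, hp_one, div_eq_inv_mul] using h

end

theorem stmt_15_general {n m : ℕ}
    (pX : (Fin n → ℝ) → ℝ) (pZ : (Fin m → ℝ) → ℝ)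
    (X : Set (Fin n → ℝ)) (Z : Set (Fin m → ℝ))
    (hX : MeasurableSet X) (hZ : MeasurableSet Z)
    (hpX_int : IntegrableOn pX X) (hpZ_int : IntegrableOn pZ Z)
    (hpX_one : ∫ x in X, pX x = 1) (hpZ_one : ∫ z in Z, pZ z = 1)
    (D : (Fin n → ℝ) → ℝ) (g : (Fin m → ℝ) → (Fin n → ℝ))
    (hD_meas : Measurable D) (hg_meas : Measurable g)
    (hD_range : ∀ x ∈ X, D x ∈ Set.Ioo (0 : ℝ) 1)
    (hDg_range : ∀ z ∈ Z, D (g z) ∈ Set.Ioo (0 : ℝ) 1)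
    (h_inv₁ : IntegrableOn (fun x => pX x / D x) X)
    (h_inv₂ : IntegrableOn (fun z => pZ z / (1 - D (g z))) Z) :
    Tendsto (fun α : ℝ =>
        (1 / (α - 1)) * Real.log (∫ x in X, pX x * D x ^ (α - 1)) +
        (1 / (α - 1)) * Real.log (∫ z in Z, pZ z * (1 - D (g z)) ^ (α - 1)))
      (𝓝[<] 1)
      (𝓝 ((∫ x in X, pX x * Real.log (D x)) +
          ∫ z in Z, pZ z * Real.log (1 - D (g z)))) := by
  have hshift : Tendsto (fun α : ℝ => α - 1) (𝓝[<] 1) (𝓝[<] 0) := by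
    refine tendsto_nhdsWithin_of_tendsto_nhds_of_eventually_within _ ?_ ?_
    · simpa using ((continuous_sub_right (1 : ℝ)).tendsto 1).mono_left nhdsWithin_le_nhds
    · filter_upwards [self_mem_nhdsWithin] with α (hα : α < 1)
      exact sub_neg.2 hα
  have hD : ∀ᵐ x ∂volume.restrict X, D x ∈ Ioc 0 1 := by
    filter_upwards [ae_restrict_mem hX] with x hx
    exact Ioo_subset_Ioc_self (hD_range x hx)
  have hDg : ∀ᵐ z ∂volume.restrict Z, 1 - D (g z) ∈ Ioc 0 1 := by
    filter_upwards [ae_restrict_mem hZ] with z hz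
    obtain ⟨h₀, h₁⟩ := hDg_range z hz
    exact ⟨by linarith, by linarith⟩
  have hX_lim := tendsto_inv_mul_log_integral_mul_rpow hD_meas.aemeasurable hD hpX_int hpX_one h_inv₁
  have hZ_lim := tendsto_inv_mul_log_integral_mul_rpow
    (measurable_const.sub (hD_meas.comp hg_meas)).aemeasurable hDg hpZ_int hpZ_one h_inv₂
  exact (hX_lim.comp hshift).add (hZ_lim.comp hshift)

/-- Rényi GAN generator loss converges to the original GAN loss as `α ↑ 1`.
Let `pX` (on `X ⊆ ℝ^n`) and `pZ` (on `Z ⊆ ℝ^m`) be probability densities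
(w.r.t. Lebesgue measure), let `D` be measurable with `D ∈ (0,1)` on the relevant
supports, and let `g` be a measurable generator.  If the original GAN generator
loss `V(D,g) = ∫ pX log D + ∫ pZ log(1 - D∘g)` is finite (both integrands are
integrable), `E_{A∼pX}[1/D(A)] < ∞`, and `E_{B∼pZ}[1/(1 - D(g(B)))] < ∞` (the
corresponding quotients are integrable), then the Rényi GAN generator loss of
order `α`,
`V_α(D,g) = (1/(α-1)) log ∫ pX D^(α-1) + (1/(α-1)) log ∫ pZ (1 - D∘g)^(α-1)`,
tends to `V(D,g)` as `α ↑ 1`. -/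
theorem stmt_15 {n m : ℕ}
    (pX : (Fin n → ℝ) → ℝ) (pZ : (Fin m → ℝ) → ℝ)
    (X : Set (Fin n → ℝ)) (Z : Set (Fin m → ℝ))
    (hX : MeasurableSet X) (hZ : MeasurableSet Z)
    (hpX_meas : Measurable pX) (hpZ_meas : Measurable pZ)
    (hpX_nonneg : ∀ x, 0 ≤ pX x) (hpZ_nonneg : ∀ z, 0 ≤ pZ z)
    (hpX_pos : ∀ x ∈ X, 0 < pX x) (hpZ_pos : ∀ z ∈ Z, 0 < pZ z)
    (hpX_int : IntegrableOn pX X) (hpZ_int : IntegrableOn pZ Z)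
    (hpX_one : ∫ x in X, pX x = 1) (hpZ_one : ∫ z in Z, pZ z = 1)
    (D : (Fin n → ℝ) → ℝ) (g : (Fin m → ℝ) → (Fin n → ℝ))
    (hD_meas : Measurable D) (hg_meas : Measurable g)
    (hD_range : ∀ x ∈ X, D x ∈ Set.Ioo (0 : ℝ) 1)
    (hDg_range : ∀ z ∈ Z, D (g z) ∈ Set.Ioo (0 : ℝ) 1)
    (hV_fin₁ : IntegrableOn (fun x => pX x * Real.log (D x)) X)
    (hV_fin₂ : IntegrableOn (fun z => pZ z * Real.log (1 - D (g z))) Z)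
    (h_inv₁ : IntegrableOn (fun x => pX x / D x) X)
    (h_inv₂ : IntegrableOn (fun z => pZ z / (1 - D (g z))) Z) :
    Tendsto (fun α : ℝ =>
        (1 / (α - 1)) * Real.log (∫ x in X, pX x * D x ^ (α - 1)) +
        (1 / (α - 1)) * Real.log (∫ z in Z, pZ z * (1 - D (g z)) ^ (α - 1)))
      (𝓝[<] 1)
      (𝓝 ((∫ x in X, pX x * Real.log (D x)) +
          ∫ z in Z, pZ z * Real.log (1 - D (g z)))) :=
  stmt_15_general pX pZ X Z hX hZ hpX_int hpZ_int hpX_one hpZ_one D g hD_meas hg_meas hD_range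
    hDg_range h_inv₁ h_inv₂
end

section
/- Let p_X and p_g be probability density functions on a measurable space 𝕏 ⊆ ℝ^d (with Lebesgue measure μ) which are strictly positive on their common support. Among all measurable discriminators D : 𝕏 → [0,1], the functional V_D(D) := ∫ p_X log D dμ + ∫ p_g log(1 − D) dμ is maximized (almost everywhere uniquely) by D* = p_X/(p_X + p_g); that is, V_D(D*) ≥ V_D(D) for every measurable D : 𝕏 → [0,1]. -/
/-!
The inequality holds pointwise on `X`.
For `a, b > 0` the map `t ↦ a log t + b log (1 - t)` on `(0, 1)` is maximised at
`s = a / (a + b)`: by `log x ≤ x - 1`,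
`a log (t / s) + b log ((1 - t) / (1 - s)) ≤ a (t / s - 1) + b ((1 - t) / (1 - s) - 1) = 0`.
At `t ∈ {0, 1}` the right-hand side is `∞`. Integrating over `X` gives the theorem.
-/

open MeasureTheory Filter Topology Set

/-- The extended-real-valued negative natural logarithm: `negLog t = -log t ∈ [0,∞]`
for `t ∈ [0,1]`, with `negLog 0 = ∞` (as `log 0 = -∞`). -/
noncomputable def negLog (t : ℝ) : ENNReal :=
  if t ≤ 0 then ⊤ else ENNReal.ofReal (-Real.log t)

@[fun_prop]
lemma measurable_negLog : Measurable negLog :=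
  Measurable.ite (measurableSet_le measurable_id measurable_const)
    measurable_const (ENNReal.measurable_ofReal.comp Real.measurable_log.neg)

lemma negLog_of_pos {t : ℝ} (ht : 0 < t) : negLog t = ENNReal.ofReal (-Real.log t) := by
  simp [negLog, not_le.2 ht]

lemma negLog_of_nonpos {t : ℝ} (ht : t ≤ 0) : negLog t = ⊤ := by
  simp [negLog, ht]

lemma mul_log_add_mul_log_one_sub_le {a b t : ℝ} (ha : 0 < a) (hb : 0 < b)
    (ht₀ : 0 < t) (ht₁ : t < 1) :
    a * Real.log t + b * Real.log (1 - t) ≤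
      a * Real.log (a / (a + b)) + b * Real.log (1 - a / (a + b)) := by
  have hab : 0 < a + b := by linarith
  have hs : 1 - a / (a + b) = b / (a + b) := by field_simp; ring
  have hlog_t : a * Real.log (t / (a / (a + b))) ≤ (a + b) * t - a := by
    have := Real.log_le_sub_one_of_pos (div_pos ht₀ (div_pos ha hab))
    calc a * Real.log (t / (a / (a + b))) ≤ a * (t / (a / (a + b)) - 1) := by gcongr
      _ = (a + b) * t - a := by field_simp
  have hlog_1t : b * Real.log ((1 - t) / (b / (a + b))) ≤ (a + b) * (1 - t) - b := by
    have := Real.log_le_sub_one_of_pos (div_pos (sub_pos.2 ht₁) (div_pos hb hab))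
    calc b * Real.log ((1 - t) / (b / (a + b))) ≤ b * ((1 - t) / (b / (a + b)) - 1) := by
          gcongr
      _ = (a + b) * (1 - t) - b := by field_simp
  rw [Real.log_div ht₀.ne' (div_pos ha hab).ne'] at hlog_t
  rw [Real.log_div (sub_pos.2 ht₁).ne' (div_pos hb hab).ne'] at hlog_1t
  rw [hs]
  linarith

lemma ofReal_mul_negLog_add_ofReal_mul_negLog_le {a b t : ℝ} (ha : 0 < a) (hb : 0 < b)
    (ht : t ∈ Icc (0 : ℝ) 1) :
    ENNReal.ofReal a * negLog (a / (a + b)) + ENNReal.ofReal b * negLog (1 - a / (a + b)) ≤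
      ENNReal.ofReal a * negLog t + ENNReal.ofReal b * negLog (1 - t) := by
  obtain ⟨ht₀, ht₁⟩ := ht
  rcases ht₀.eq_or_lt with rfl | ht₀
  · simp [negLog_of_nonpos le_rfl, ENNReal.mul_top, ha]
  rcases ht₁.eq_or_lt with rfl | ht₁
  · simp [negLog_of_nonpos le_rfl, ENNReal.mul_top, hb]
  have hab : 0 < a + b := by linarith
  have hs₀ : 0 < a / (a + b) := div_pos ha hab
  have hs₁ : 0 < 1 - a / (a + b) := sub_pos.2 ((div_lt_one hab).2 (by linarith))
  have hlog_s : 0 ≤ -Real.log (a / (a + b)) :=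
    neg_nonneg.2 (Real.log_nonpos hs₀.le (by linarith))
  have hlog_1s : 0 ≤ -Real.log (1 - a / (a + b)) :=
    neg_nonneg.2 (Real.log_nonpos hs₁.le (by linarith))
  rw [negLog_of_pos hs₀, negLog_of_pos hs₁, negLog_of_pos ht₀, negLog_of_pos (sub_pos.2 ht₁),
    ← ENNReal.ofReal_mul ha.le, ← ENNReal.ofReal_mul hb.le, ← ENNReal.ofReal_mul ha.le,
    ← ENNReal.ofReal_mul hb.le,
    ← ENNReal.ofReal_add (mul_nonneg ha.le hlog_s) (mul_nonneg hb.le hlog_1s)]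
  refine le_trans (ENNReal.ofReal_le_ofReal ?_) ENNReal.ofReal_add_le
  linarith [mul_log_add_mul_log_one_sub_le ha hb ht₀ ht₁]

theorem stmt_16_general {d : ℕ}
    (pX pg : (Fin d → ℝ) → ℝ) (X : Set (Fin d → ℝ))
    (hpX_meas : Measurable pX) (hpg_meas : Measurable pg)
    (hpX_pos : ∀ x ∈ X, 0 < pX x) (hpg_pos : ∀ x ∈ X, 0 < pg x)
    (D : (Fin d → ℝ) → ℝ) (hD_meas : Measurable D)
    (hD_range : ∀ x ∈ X, D x ∈ Set.Icc (0 : ℝ) 1) :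
    (∫⁻ x in X, ENNReal.ofReal (pX x) * negLog (pX x / (pX x + pg x))) +
      (∫⁻ x in X, ENNReal.ofReal (pg x) * negLog (1 - pX x / (pX x + pg x))) ≤
    (∫⁻ x in X, ENNReal.ofReal (pX x) * negLog (D x)) +
      (∫⁻ x in X, ENNReal.ofReal (pg x) * negLog (1 - D x)) := by
  have hm₁ : Measurable fun x ↦ ENNReal.ofReal (pX x) * negLog (pX x / (pX x + pg x)) := by
    fun_prop
  have hm₂ : Measurable fun x ↦ ENNReal.ofReal (pX x) * negLog (D x) := by fun_prop
  rw [← lintegral_add_left hm₁, ← lintegral_add_left hm₂]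
  refine setLIntegral_mono (by fun_prop) fun x hx ↦ ?_
  exact ofReal_mul_negLog_add_ofReal_mul_negLog_le (hpX_pos x hx) (hpg_pos x hx) (hD_range x hx)

/-- Optimal GAN discriminator.  Let `pX` and `pg` be probability densities on
`𝕏 ⊆ ℝ^d` (Lebesgue measure), strictly positive on their common support `X`.
Among all measurable discriminators `D : 𝕏 → [0,1]`, the objective
`V_D(D) = ∫ pX log D + ∫ pg log(1 - D)` (with values in `[-∞, 0]`) is maximized by
`D* = pX/(pX + pg)`.  Equivalently (as stated here, avoiding signed infinite
integrals): the negated objective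
`-V_D(D) = ∫ pX (-log D) + ∫ pg (-log(1 - D)) ∈ [0,∞]` is minimized by `D*`,
i.e. `-V_D(D*) ≤ -V_D(D)` for every measurable `D : 𝕏 → [0,1]`. -/
theorem stmt_16 {d : ℕ}
    (pX pg : (Fin d → ℝ) → ℝ) (X : Set (Fin d → ℝ)) (hX : MeasurableSet X)
    (hpX_meas : Measurable pX) (hpg_meas : Measurable pg)
    (hpX_nonneg : ∀ x, 0 ≤ pX x) (hpg_nonneg : ∀ x, 0 ≤ pg x)
    (hpX_pos : ∀ x ∈ X, 0 < pX x) (hpg_pos : ∀ x ∈ X, 0 < pg x)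
    (hpX_int : IntegrableOn pX X) (hpg_int : IntegrableOn pg X)
    (hpX_one : ∫ x in X, pX x = 1) (hpg_one : ∫ x in X, pg x = 1)
    (D : (Fin d → ℝ) → ℝ) (hD_meas : Measurable D)
    (hD_range : ∀ x ∈ X, D x ∈ Set.Icc (0 : ℝ) 1) :
    (∫⁻ x in X, ENNReal.ofReal (pX x) * negLog (pX x / (pX x + pg x))) +
      (∫⁻ x in X, ENNReal.ofReal (pg x) * negLog (1 - pX x / (pX x + pg x))) ≤
    (∫⁻ x in X, ENNReal.ofReal (pX x) * negLog (D x)) +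
      (∫⁻ x in X, ENNReal.ofReal (pg x) * negLog (1 - D x)) :=
  stmt_16_general pX pg X hpX_meas hpg_meas hpX_pos hpg_pos D hD_meas hD_range
end

section
/- Let p_X and p_g be probability density functions on a measurable space 𝕏 ⊆ ℝ^d (with Lebesgue measure μ) which are strictly positive on their common support, let α > 0 with α ≠ 1, and let D* = p_X/(p_X + p_g). Then the Rényi GAN generator loss of order α evaluated at the optimal discriminator satisfies V_α(D*) := (1/(α−1)) log(∫ p_X (D*)^{α−1} dμ) + (1/(α−1)) log(∫ p_g (1 − D*)^{α−1} dμ) = 2 · JR_α(p_X ∥ p_g) − 2 log 2 ≥ −2 log 2, with equality if and only if p_g = p_X almost everywhere. -/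
/-!
Write `m = (p_X + p_g)/2`. Pointwise, `p_X (D*)^(α-1) = 2^(1-α) p_X^α m^(1-α)` and
`p_g (1 - D*)^(α-1) = 2^(1-α) p_g^α m^(1-α)`, so `V_α(D*) = D_α(p_X‖m) + D_α(p_g‖m) - 2 log 2`.
Each `D_α(p‖m)` is nonnegative and vanishes only when `p = m` a.e.: Bernoulli's inequality makes
`(p^α m^(1-α) - (α p + (1-α) m))/(α-1)` pointwise nonnegative, with equality exactly where `p = m`,
and integrating it gives `(∫ p^α m^(1-α) - 1)/(α-1) ≥ 0`, which has the sign of `D_α(p‖m)`.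
-/

open MeasureTheory

noncomputable def renyiDiv {Ω : Type*} [MeasurableSpace Ω] (μ : Measure Ω) (α : ℝ)
    (f h : Ω → ℝ) : ℝ :=
  1 / (α - 1) * Real.log (∫ x, f x ^ α * h x ^ (1 - α) ∂μ)

noncomputable def renyiGap (α a b : ℝ) : ℝ :=
  (a ^ α * b ^ (1 - α) - (α * a + (1 - α) * b)) / (α - 1)

section Pointwise

variable {α a b : ℝ}

lemma renyiGap_eq_mul (ha : 0 ≤ a) (hb : 0 < b) : renyiGap α a b = b * renyiGap α (a / b) 1 := by
  have hpow : a ^ α * b ^ (1 - α) = b * (a / b) ^ α := by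
    rw [Real.div_rpow ha hb.le, Real.rpow_sub hb, Real.rpow_one]
    field_simp
  unfold renyiGap
  rw [hpow, Real.one_rpow, mul_one]
  field_simp

lemma renyiGap_one_pos {t : ℝ} (hα : 0 < α) (hα1 : α ≠ 1) (ht : 0 ≤ t) (ht1 : t ≠ 1) :
    0 < renyiGap α t 1 := by
  have hs : -1 ≤ t - 1 := by linarith
  have hs0 : t - 1 ≠ 0 := sub_ne_zero.mpr ht1
  have ht' : t = 1 + (t - 1) := by ring
  unfold renyiGap
  rw [Real.one_rpow, mul_one]
  rcases hα1.lt_or_gt with hlt | hgt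
  · have := rpow_one_add_lt_one_add_mul_self hs hs0 hα hlt
    rw [← ht'] at this
    exact div_pos_of_neg_of_neg (by linarith) (by linarith)
  · have := one_add_mul_self_lt_rpow_one_add hs hs0 hgt
    rw [← ht'] at this
    exact div_pos (by linarith) (by linarith)

lemma renyiGap_self (ha : 0 < a) : renyiGap α a a = 0 := by
  unfold renyiGap
  rw [← Real.rpow_add ha, add_sub_cancel, Real.rpow_one]
  ring

lemma renyiGap_pos (hα : 0 < α) (hα1 : α ≠ 1) (ha : 0 ≤ a) (hb : 0 < b) (hab : a ≠ b) :
    0 < renyiGap α a b := by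
  rw [renyiGap_eq_mul ha hb]
  refine mul_pos hb (renyiGap_one_pos hα hα1 (div_nonneg ha hb.le) ?_)
  rwa [Ne, div_eq_one_iff_eq hb.ne']

lemma renyiGap_nonneg (hα : 0 < α) (hα1 : α ≠ 1) (ha : 0 ≤ a) (hb : 0 < b) :
    0 ≤ renyiGap α a b := by
  rcases eq_or_ne a b with rfl | hab
  · exact (renyiGap_self hb).ge
  · exact (renyiGap_pos hα hα1 ha hb hab).le

lemma mul_div_add_rpow_sub_one (ha : 0 < a) (hb : 0 ≤ b) :
    a * (a / (a + b)) ^ (α - 1) = 2 ^ (1 - α) * (a ^ α * ((a + b) / 2) ^ (1 - α)) := by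
  have hab : 0 < a + b := by linarith
  rw [Real.div_rpow ha.le hab.le, Real.div_rpow hab.le zero_le_two, Real.rpow_sub ha,
    Real.rpow_sub hab, Real.rpow_sub two_pos, Real.rpow_one, Real.rpow_one, Real.rpow_one]
  field_simp
  rw [← Real.rpow_add hab, add_sub_cancel, Real.rpow_one]

end Pointwise

lemma one_div_mul_log_nonneg {I c : ℝ} (hI : 0 < I) (h : 0 ≤ (I - 1) / c) :
    0 ≤ 1 / c * Real.log I := by
  rcases div_nonneg_iff.mp h with ⟨hI1, hc⟩ | ⟨hI1, hc⟩
  · exact mul_nonneg (one_div_nonneg.mpr hc) (Real.log_nonneg (by linarith))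
  · exact mul_nonneg_of_nonpos_of_nonpos (one_div_nonpos.mpr hc)
      (Real.log_nonpos hI.le (by linarith))

section Midpoint

variable {Ω : Type*} [MeasurableSpace Ω] {μ : Measure Ω} {p q : Ω → ℝ} {α : ℝ}

lemma integrable_rpow_mul_midpoint_rpow (hα : 0 < α) (hp_pos : ∀ᵐ x ∂μ, 0 < p x)
    (hq_nonneg : ∀ᵐ x ∂μ, 0 ≤ q x) (hp : Integrable p μ) (hq : Integrable q μ) :
    Integrable (fun x => p x ^ α * ((p x + q x) / 2) ^ (1 - α)) μ := by
  have hmeas : AEStronglyMeasurable (fun x => p x ^ α * ((p x + q x) / 2) ^ (1 - α)) μ :=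
    ((hp.aemeasurable.pow_const α).mul
      (((hp.aemeasurable.add hq.aemeasurable).div_const 2).pow_const _)).aestronglyMeasurable
  rcases le_total α 1 with hα1 | hα1
  · refine Integrable.mono'
      ((hp.const_mul α).add ((hp.add hq).div_const 2 |>.const_mul (1 - α))) hmeas ?_
    filter_upwards [hp_pos, hq_nonneg] with x hpx hqx
    rw [Real.norm_of_nonneg (by positivity)]
    exact Real.geom_mean_le_arith_mean2_weighted hα.le (by linarith) hpx.le (by positivity)
      (by ring)
  · refine Integrable.mono' (hp.const_mul (2 ^ (α - 1))) hmeas ?_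
    filter_upwards [hp_pos, hq_nonneg] with x hpx hqx
    rw [Real.norm_of_nonneg (by positivity)]
    calc p x ^ α * ((p x + q x) / 2) ^ (1 - α)
        ≤ p x ^ α * (p x / 2) ^ (1 - α) := by
          gcongr ?_ * ?_
          exact Real.rpow_le_rpow_of_nonpos (by positivity) (by linarith) (by linarith)
      _ = 2 ^ (α - 1) * p x := by
          rw [Real.div_rpow hpx.le zero_le_two, Real.rpow_sub hpx, Real.rpow_sub two_pos,
            Real.rpow_sub two_pos, Real.rpow_one, Real.rpow_one]
          field_simp

lemma integral_rpow_mul_midpoint_rpow_pos (hα : 0 < α) (hp_pos : ∀ᵐ x ∂μ, 0 < p x)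
    (hq_nonneg : ∀ᵐ x ∂μ, 0 ≤ q x) (hp : Integrable p μ) (hq : Integrable q μ)
    (hp_one : ∫ x, p x ∂μ = 1) :
    0 < ∫ x, p x ^ α * ((p x + q x) / 2) ^ (1 - α) ∂μ := by
  have hμ : μ ≠ 0 := by
    rintro rfl
    simp at hp_one
  have hf_pos : ∀ᵐ x ∂μ, 0 < p x ^ α * ((p x + q x) / 2) ^ (1 - α) := by
    filter_upwards [hp_pos, hq_nonneg] with x hpx hqx
    positivity
  rw [integral_pos_iff_support_of_nonneg_ae (hf_pos.mono fun x hx => hx.le)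
    (integrable_rpow_mul_midpoint_rpow hα hp_pos hq_nonneg hp hq)]
  refine (Measure.measure_univ_pos.mpr hμ).trans_le (measure_mono_ae ?_)
  filter_upwards [hf_pos] with x hx _ using hx.ne'

lemma integral_renyiGap_midpoint (hp : Integrable p μ) (hq : Integrable q μ)
    (hf : Integrable (fun x => p x ^ α * ((p x + q x) / 2) ^ (1 - α)) μ)
    (hp_one : ∫ x, p x ∂μ = 1) (hq_one : ∫ x, q x ∂μ = 1) :
    ∫ x, renyiGap α (p x) ((p x + q x) / 2) ∂μ =
      ((∫ x, p x ^ α * ((p x + q x) / 2) ^ (1 - α) ∂μ) - 1) / (α - 1) := by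
  have hm : Integrable (fun x => (p x + q x) / 2) μ := (hp.add hq).div_const 2
  have hm_one : ∫ x, (p x + q x) / 2 ∂μ = 1 := by
    rw [integral_div, integral_add hp hq, hp_one, hq_one]
    norm_num
  have hlin_int : Integrable (fun x => α * p x + (1 - α) * ((p x + q x) / 2)) μ :=
    (hp.const_mul α).add (hm.const_mul (1 - α))
  have hlin : ∫ x, (α * p x + (1 - α) * ((p x + q x) / 2)) ∂μ = 1 := by
    rw [integral_add (hp.const_mul α) (hm.const_mul (1 - α)), integral_const_mul,
      integral_const_mul, hp_one, hm_one]
    ring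
  unfold renyiGap
  rw [integral_div, integral_sub hf hlin_int, hlin]

lemma renyiDiv_midpoint_nonneg (hα : 0 < α) (hα1 : α ≠ 1) (hp_pos : ∀ᵐ x ∂μ, 0 < p x)
    (hq_nonneg : ∀ᵐ x ∂μ, 0 ≤ q x) (hp : Integrable p μ) (hq : Integrable q μ)
    (hp_one : ∫ x, p x ∂μ = 1) (hq_one : ∫ x, q x ∂μ = 1) :
    0 ≤ renyiDiv μ α p (fun x => (p x + q x) / 2) := by
  refine one_div_mul_log_nonneg
    (integral_rpow_mul_midpoint_rpow_pos hα hp_pos hq_nonneg hp hq hp_one) ?_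
  rw [← integral_renyiGap_midpoint hp hq
    (integrable_rpow_mul_midpoint_rpow hα hp_pos hq_nonneg hp hq) hp_one hq_one]
  refine integral_nonneg_of_ae ?_
  filter_upwards [hp_pos, hq_nonneg] with x hpx hqx
  exact renyiGap_nonneg hα hα1 hpx.le (by positivity)

lemma renyiDiv_midpoint_eq_zero_iff (hα : 0 < α) (hα1 : α ≠ 1) (hp_pos : ∀ᵐ x ∂μ, 0 < p x)
    (hq_nonneg : ∀ᵐ x ∂μ, 0 ≤ q x) (hp : Integrable p μ) (hq : Integrable q μ)
    (hp_one : ∫ x, p x ∂μ = 1) (hq_one : ∫ x, q x ∂μ = 1) :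
    renyiDiv μ α p (fun x => (p x + q x) / 2) = 0 ↔ q =ᵐ[μ] p := by
  have hf := integrable_rpow_mul_midpoint_rpow hα hp_pos hq_nonneg hp hq
  have hgap := integral_renyiGap_midpoint hp hq hf hp_one hq_one
  constructor
  · intro h
    have hI : ∫ x, p x ^ α * ((p x + q x) / 2) ^ (1 - α) ∂μ = 1 :=
      Real.eq_one_of_pos_of_log_eq_zero
        (integral_rpow_mul_midpoint_rpow_pos hα hp_pos hq_nonneg hp hq hp_one)
        ((mul_eq_zero.mp h).resolve_left (one_div_ne_zero (sub_ne_zero.mpr hα1)))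
    rw [hI, sub_self, zero_div] at hgap
    have hgap_nonneg : 0 ≤ᵐ[μ] fun x => renyiGap α (p x) ((p x + q x) / 2) := by
      filter_upwards [hp_pos, hq_nonneg] with x hpx hqx
      exact renyiGap_nonneg hα hα1 hpx.le (by positivity)
    have hgap_int : Integrable (fun x => renyiGap α (p x) ((p x + q x) / 2)) μ :=
      (hf.sub ((hp.const_mul α).add (((hp.add hq).div_const 2).const_mul (1 - α)))).div_const _
    filter_upwards [(integral_eq_zero_iff_of_nonneg_ae hgap_nonneg hgap_int).mp hgap, hp_pos,
      hq_nonneg] with x hx hpx hqx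
    by_contra hne
    have hpm : p x ≠ (p x + q x) / 2 := fun h => hne (by linarith)
    exact (renyiGap_pos hα hα1 hpx.le (by positivity) hpm).ne' hx
  · intro hqp
    have hI : ∫ x, p x ^ α * ((p x + q x) / 2) ^ (1 - α) ∂μ = 1 := by
      rw [integral_congr_ae (g := p) ?_, hp_one]
      filter_upwards [hqp, hp_pos] with x hqx hpx
      rw [hqx, add_self_div_two, ← Real.rpow_add hpx, add_sub_cancel, Real.rpow_one]
    rw [renyiDiv, hI, Real.log_one, mul_zero]

lemma log_integral_mul_div_add_rpow (hα : 0 < α) (hα1 : α ≠ 1) (hp_pos : ∀ᵐ x ∂μ, 0 < p x)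
    (hq_nonneg : ∀ᵐ x ∂μ, 0 ≤ q x) (hp : Integrable p μ) (hq : Integrable q μ)
    (hp_one : ∫ x, p x ∂μ = 1) :
    1 / (α - 1) * Real.log (∫ x, p x * (p x / (p x + q x)) ^ (α - 1) ∂μ) =
      renyiDiv μ α p (fun x => (p x + q x) / 2) - Real.log 2 := by
  have hI := integral_rpow_mul_midpoint_rpow_pos hα hp_pos hq_nonneg hp hq hp_one
  have hcongr : ∫ x, p x * (p x / (p x + q x)) ^ (α - 1) ∂μ =
      2 ^ (1 - α) * ∫ x, p x ^ α * ((p x + q x) / 2) ^ (1 - α) ∂μ := by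
    rw [← integral_const_mul]
    refine integral_congr_ae ?_
    filter_upwards [hp_pos, hq_nonneg] with x hpx hqx
    exact mul_div_add_rpow_sub_one hpx hqx
  have hα1' : α - 1 ≠ 0 := sub_ne_zero.mpr hα1
  rw [hcongr, Real.log_mul (by positivity) hI.ne', Real.log_rpow two_pos, renyiDiv]
  field_simp
  ring

lemma log_integral_mul_one_sub_div_add_rpow (hα : 0 < α) (hα1 : α ≠ 1)
    (hp_nonneg : ∀ᵐ x ∂μ, 0 ≤ p x) (hq_pos : ∀ᵐ x ∂μ, 0 < q x) (hp : Integrable p μ)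
    (hq : Integrable q μ) (hq_one : ∫ x, q x ∂μ = 1) :
    1 / (α - 1) * Real.log (∫ x, q x * (1 - p x / (p x + q x)) ^ (α - 1) ∂μ) =
      renyiDiv μ α q (fun x => (p x + q x) / 2) - Real.log 2 := by
  have hqp : (fun x => (q x + p x) / 2) = fun x => (p x + q x) / 2 := by
    simp only [add_comm]
  rw [← hqp, ← log_integral_mul_div_add_rpow hα hα1 hq_pos hp_nonneg hq hp hq_one]
  congr 2
  refine integral_congr_ae ?_
  filter_upwards [hp_nonneg, hq_pos] with x hpx hqx
  rw [one_sub_div (by positivity), add_sub_cancel_left, add_comm]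

end Midpoint

theorem stmt_17_general {d : ℕ}
    (pX pg : (Fin d → ℝ) → ℝ) (X : Set (Fin d → ℝ)) (hX : MeasurableSet X)
    (hpX_pos : ∀ x ∈ X, 0 < pX x) (hpg_pos : ∀ x ∈ X, 0 < pg x)
    (hpX_int : IntegrableOn pX X) (hpg_int : IntegrableOn pg X)
    (hpX_one : ∫ x in X, pX x = 1) (hpg_one : ∫ x in X, pg x = 1)
    (α : ℝ) (hα : 0 < α) (hα1 : α ≠ 1) :
    ∀ V JR : ℝ,
      V = (1 / (α - 1)) *
            Real.log (∫ x in X, pX x * (pX x / (pX x + pg x)) ^ (α - 1)) +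
          (1 / (α - 1)) *
            Real.log (∫ x in X, pg x * (1 - pX x / (pX x + pg x)) ^ (α - 1)) →
      JR = (1 / 2) * ((1 / (α - 1)) *
              Real.log (∫ x in X, pX x ^ α * ((pX x + pg x) / 2) ^ (1 - α))) +
           (1 / 2) * ((1 / (α - 1)) *
              Real.log (∫ x in X, pg x ^ α * ((pX x + pg x) / 2) ^ (1 - α))) →
      (V = 2 * JR - 2 * Real.log 2 ∧ -(2 * Real.log 2) ≤ V ∧
        (V = -(2 * Real.log 2) ↔ pg =ᵐ[volume.restrict X] pX)) := by
  intro V JR hV hJR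
  have hpX : ∀ᵐ x ∂volume.restrict X, 0 < pX x := (ae_restrict_mem hX).mono hpX_pos
  have hpg : ∀ᵐ x ∂volume.restrict X, 0 < pg x := (ae_restrict_mem hX).mono hpg_pos
  have hpX₀ : ∀ᵐ x ∂volume.restrict X, 0 ≤ pX x := hpX.mono fun _ => le_of_lt
  have hpg₀ : ∀ᵐ x ∂volume.restrict X, 0 ≤ pg x := hpg.mono fun _ => le_of_lt
  have hqp : (fun x => (pg x + pX x) / 2) = fun x => (pX x + pg x) / 2 := by
    simp only [add_comm]
  have hD₁ := renyiDiv_midpoint_nonneg hα hα1 hpX hpg₀ hpX_int hpg_int hpX_one hpg_one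
  have hD₂ := renyiDiv_midpoint_nonneg hα hα1 hpg hpX₀ hpg_int hpX_int hpg_one hpX_one
  have hE₁ := renyiDiv_midpoint_eq_zero_iff hα hα1 hpX hpg₀ hpX_int hpg_int hpX_one hpg_one
  have hE₂ := renyiDiv_midpoint_eq_zero_iff hα hα1 hpg hpX₀ hpg_int hpX_int hpg_one hpX_one
  rw [hqp] at hD₂ hE₂
  have hJR' : 2 * JR = renyiDiv (volume.restrict X) α pX (fun x => (pX x + pg x) / 2) +
      renyiDiv (volume.restrict X) α pg (fun x => (pX x + pg x) / 2) := by
    rw [hJR, renyiDiv, renyiDiv]; ring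
  have hVJR : V = 2 * JR - 2 * Real.log 2 := by
    rw [hV, log_integral_mul_div_add_rpow hα hα1 hpX hpg₀ hpX_int hpg_int hpX_one,
      log_integral_mul_one_sub_div_add_rpow hα hα1 hpX₀ hpg hpX_int hpg_int hpg_one, hJR']
    ring
  refine ⟨hVJR, by linarith, ?_⟩
  rw [hVJR, sub_eq_neg_self, hJR', add_eq_zero_iff_of_nonneg hD₁ hD₂, hE₁, hE₂]
  exact ⟨And.left, fun h => ⟨h, h.symm⟩⟩

/-- Rényi GAN generator loss at the optimal discriminator.  Let `pX`, `pg` be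
probability densities on `𝕏 ⊆ ℝ^d` (Lebesgue measure), strictly positive on their
common support `X`, let `α > 0`, `α ≠ 1`, and let `D* = pX/(pX + pg)`.  Then
`V_α(D*) = (1/(α-1)) log ∫ pX (D*)^(α-1) + (1/(α-1)) log ∫ pg (1 - D*)^(α-1)`
satisfies `V_α(D*) = 2 JR_α(pX ‖ pg) - 2 log 2 ≥ -2 log 2`, with equality iff
`pg = pX` almost everywhere, where
`JR_α(f‖h) = (1/2) D_α(f ‖ (f+h)/2) + (1/2) D_α(h ‖ (f+h)/2)` and
`D_α(f‖h) = (1/(α-1)) log ∫ f^α h^(1-α) dμ`. -/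
theorem stmt_17 {d : ℕ}
    (pX pg : (Fin d → ℝ) → ℝ) (X : Set (Fin d → ℝ)) (hX : MeasurableSet X)
    (hpX_meas : Measurable pX) (hpg_meas : Measurable pg)
    (hpX_nonneg : ∀ x, 0 ≤ pX x) (hpg_nonneg : ∀ x, 0 ≤ pg x)
    (hpX_pos : ∀ x ∈ X, 0 < pX x) (hpg_pos : ∀ x ∈ X, 0 < pg x)
    (hpX_int : IntegrableOn pX X) (hpg_int : IntegrableOn pg X)
    (hpX_one : ∫ x in X, pX x = 1) (hpg_one : ∫ x in X, pg x = 1)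
    (α : ℝ) (hα : 0 < α) (hα1 : α ≠ 1) :
    ∀ V JR : ℝ,
      V = (1 / (α - 1)) *
            Real.log (∫ x in X, pX x * (pX x / (pX x + pg x)) ^ (α - 1)) +
          (1 / (α - 1)) *
            Real.log (∫ x in X, pg x * (1 - pX x / (pX x + pg x)) ^ (α - 1)) →
      JR = (1 / 2) * ((1 / (α - 1)) *
              Real.log (∫ x in X, pX x ^ α * ((pX x + pg x) / 2) ^ (1 - α))) +
           (1 / 2) * ((1 / (α - 1)) *
              Real.log (∫ x in X, pg x ^ α * ((pX x + pg x) / 2) ^ (1 - α))) →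
      (V = 2 * JR - 2 * Real.log 2 ∧ -(2 * Real.log 2) ≤ V ∧
        (V = -(2 * Real.log 2) ↔ pg =ᵐ[volume.restrict X] pX)) :=
  stmt_17_general pX pg X hX hpX_pos hpg_pos hpX_int hpg_int hpX_one hpg_one α hα hα1
end
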